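/- arXiv:1002.4210 — 8 statements merged into one kernel-verified Lean document; each statement's English description precedes it below -/
import Mathlib

section
/- For every hypergraph H on n vertices that admits a conflict-free coloring, the unique-maximum chromatic number satisfies χ_um(H) ≤ n − ⌈n / χ_cf(H)⌉ + 1. -/
open scoped Classical

noncomputable section

/-- A conflict-free coloring of a hyperedge set `E` with `k` colors: every hyperedge
has some color occurring on exactly one of its vertices. -/
def IsCFColoring {V : Type} {k : ℕ} (E : Set (Finset V)) (C : V → Fin k) : Prop :=
  ∀ e ∈ E, ∃ c : Fin k, (e.filter fun v => C v = c).card = 1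

/-- A unique-maximum coloring of a hyperedge set `E` with `k` colors: every hyperedge
has exactly one vertex whose color is maximum on the hyperedge. -/
def IsUMColoring {V : Type} {k : ℕ} (E : Set (Finset V)) (C : V → Fin k) : Prop :=
  ∀ e ∈ E, ∃! v, v ∈ e ∧ ∀ u ∈ e, C u ≤ C v

/-- An odd coloring of a hyperedge set `E` with `k` colors: every hyperedge
has some color occurring on an odd number of its vertices. -/
def IsOddColoring {V : Type} {k : ℕ} (E : Set (Finset V)) (C : V → Fin k) : Prop :=
  ∀ e ∈ E, ∃ c : Fin k, Odd ((e.filter fun v => C v = c).card)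

/-- The conflict-free chromatic number of a hypergraph. -/
def cfNum {V : Type} (E : Set (Finset V)) : ℕ :=
  sInf {k | ∃ C : V → Fin k, IsCFColoring E C}

/-- The unique-maximum chromatic number of a hypergraph. -/
def umNum {V : Type} (E : Set (Finset V)) : ℕ :=
  sInf {k | ∃ C : V → Fin k, IsUMColoring E C}

/-- The odd chromatic number of a hypergraph. -/
def oddNum {V : Type} (E : Set (Finset V)) : ℕ :=
  sInf {k | ∃ C : V → Fin k, IsOddColoring E C}

/-- The hyperedges of the path hypergraph of a graph `G`: vertex sets of simple paths. -/
def pathEdges {V : Type} (G : SimpleGraph V) : Set (Finset V) :=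
  {S | ∃ (u v : V) (p : G.Walk u v), p.IsPath ∧ S = p.support.toFinset}

/-- Unique-maximum chromatic number of a graph with respect to paths. -/
def UM {V : Type} (G : SimpleGraph V) : ℕ := umNum (pathEdges G)

/-- Conflict-free chromatic number of a graph with respect to paths. -/
def CF {V : Type} (G : SimpleGraph V) : ℕ := cfNum (pathEdges G)

/-- Odd chromatic number of a graph with respect to paths. -/
def ODD {V : Type} (G : SimpleGraph V) : ℕ := oddNum (pathEdges G)

/-- The complete binary tree with `d` levels (`2^d - 1` vertices), with vertices the
binary strings of length `< d`; each vertex `l` is adjacent to its children `b :: l`. -/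
def binaryTree (d : ℕ) : SimpleGraph {l : List Bool // l.length < d} :=
  SimpleGraph.fromRel fun a b => ∃ bit : Bool, b.1 = bit :: a.1

/-- `IsSubdivPaths G H f P` : the data `f` (branch vertices) and `P` (a path of `H` for
every edge of `G`) witness that `H` contains a subdivision of `G` as a subgraph:
`f` is injective, the paths are internally disjoint from each other and from the
branch vertices. -/
def IsSubdivPaths {V W : Type} (G : SimpleGraph V) (H : SimpleGraph W) (f : V → W)
    (P : ∀ u v, G.Adj u v → H.Walk (f u) (f v)) : Prop :=
  Function.Injective f ∧
  (∀ u v (h : G.Adj u v), (P u v h).IsPath) ∧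
  (∀ u v (h : G.Adj u v), P v u h.symm = (P u v h).reverse) ∧
  (∀ u v (h : G.Adj u v) (w : W),
    w ∈ (P u v h).support → w ≠ f u → w ≠ f v → w ∉ Set.range f) ∧
  (∀ u v (h : G.Adj u v) (u' v' : V) (h' : G.Adj u' v'), s(u, v) ≠ s(u', v') →
    ∀ w : W, w ∈ (P u v h).support → w ∈ (P u' v' h').support → w ∈ Set.range f)

/-- `H` contains a subdivision of `G` as a subgraph. -/
def ContainsSubdivision {V W : Type} (G : SimpleGraph V) (H : SimpleGraph W) : Prop :=
  ∃ f P, IsSubdivPaths G H f P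

/-- `IsSubdivision G H f P` : the data `f`, `P` witness that `H` is (exactly) a
subdivision of `G`: additionally to `IsSubdivPaths`, every vertex of `H` and every
edge of `H` comes from some path replacing an edge of `G`, or is a branch vertex. -/
def IsSubdivision {V W : Type} (G : SimpleGraph V) (H : SimpleGraph W) (f : V → W)
    (P : ∀ u v, G.Adj u v → H.Walk (f u) (f v)) : Prop :=
  IsSubdivPaths G H f P ∧
  (∀ w : W, w ∈ Set.range f ∨ ∃ u v h, w ∈ (P u v h).support) ∧
  (∀ a b : W, H.Adj a b ↔ ∃ u v h, s(a, b) ∈ (P u v h).edges)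

/-- `H` is a subdivision of `G`. -/
def Subdivides {V W : Type} (G : SimpleGraph V) (H : SimpleGraph W) : Prop :=
  ∃ f P, IsSubdivision G H f P

/-- A graph is UM-critical if every proper subgraph has strictly smaller
unique-maximum chromatic number with respect to paths. -/
def UMCritical {V : Type} (G : SimpleGraph V) : Prop :=
  ∀ G' : G.Subgraph, G' ≠ ⊤ → UM G'.coe < UM G

/-- A graph is `k`-UM-critical if it is UM-critical and its UM number equals `k`. -/
def UMCriticalK {V : Type} (k : ℕ) (G : SimpleGraph V) : Prop :=
  UMCritical G ∧ UM G = k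

/-- A family of sequences of distinct elements of `Fin n` is prefix set-free if no
nonempty prefix of a member (including the member itself) has the same underlying set
as another member. -/
def IsPSF {n : ℕ} (F : Finset (List (Fin n))) : Prop :=
  (∀ l ∈ F, l.Nodup) ∧
  ∀ A ∈ F, ∀ B ∈ F, A ≠ B →
    ∀ p : List (Fin n), p ≠ [] → p <+: A → p.toFinset ≠ B.toFinset

/-- A `[k,d,n]` prefix set-free family: ground set `Fin n`, every sequence of length at
least `k`, and at least `2^d` members. -/
def IsPSFFamily (k d n : ℕ) (F : Finset (List (Fin n))) : Prop :=
  IsPSF F ∧ (∀ l ∈ F, k ≤ l.length) ∧ 2 ^ d ≤ F.card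

lemma stmt0_aux {V : Type} [Fintype V] [Nonempty V] (E : Set (Finset V)) {k : ℕ}
    (C : V → Fin k) (hC : IsCFColoring E C) :
    umNum E ≤ Fintype.card V - (Fintype.card V + k - 1) / k + 1 := by
  classical
  have hk0 : 0 < k := by
    obtain ⟨v⟩ := (inferInstance : Nonempty V)
    have hlt : (C v).val < k := (C v).isLt
    omega
  obtain ⟨c, -, hc⟩ := Finset.exists_max_image Finset.univ
    (fun c : Fin k => (Finset.univ.filter fun v => C v = c).card) ⟨⟨0, hk0⟩, Finset.mem_univ _⟩
  set S := Finset.univ.filter (fun v => C v = c) with hS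
  have hsum : Fintype.card V = ∑ c' : Fin k, (Finset.univ.filter fun v => C v = c').card := by
    rw [← Finset.card_univ]
    exact Finset.card_eq_sum_card_fiberwise (fun v _ => Finset.mem_univ (C v))
  have hnk : Fintype.card V ≤ k * S.card := by
    calc Fintype.card V = ∑ c' : Fin k, (Finset.univ.filter fun v => C v = c').card := hsum
    _ ≤ ∑ _c' : Fin k, S.card := Finset.sum_le_sum (fun c' _ => hc c' (Finset.mem_univ _))
    _ = k * S.card := by rw [Finset.sum_const, Finset.card_univ, Fintype.card_fin, smul_eq_mul]
  have hceil : (Fintype.card V + k - 1) / k ≤ S.card := by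
    rw [Nat.div_le_iff_le_mul_add_pred hk0]
    have h4 : Fintype.card V + k - 1 = Fintype.card V + (k - 1) := by omega
    rw [h4]
    exact Nat.add_le_add_right hnk _
  set m := Fintype.card V - S.card with hm
  have hcompl : Sᶜ.card = m := by rw [Finset.card_compl]
  let eq1 : {x // x ∈ Sᶜ} ≃ Fin m := Sᶜ.equivFin.trans (finCongr hcompl)
  let D : V → Fin (m + 1) := fun v =>
    if h : v ∈ S then 0 else (eq1 ⟨v, Finset.mem_compl.mpr h⟩).succ
  have hD0 : ∀ v, v ∈ S → D v = 0 := fun v h => by simp [D, h]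
  have hDne : ∀ v, v ∉ S → D v ≠ 0 := fun v h => by simp [D, h, Fin.succ_ne_zero]
  have hDinj : ∀ u v, u ∉ S → v ∉ S → D u = D v → u = v := by
    intro u v hu hv h
    simp only [D, dif_neg hu, dif_neg hv] at h
    exact congrArg Subtype.val (eq1.injective (Fin.succ_injective _ h))
  have hUM : IsUMColoring E D := by
    intro e he
    by_cases hsub : ∀ v ∈ e, v ∈ S
    · obtain ⟨c', hc'⟩ := hC e he
      obtain ⟨w, hw⟩ := Finset.card_eq_one.mp hc'
      have hwe : w ∈ e ∧ C w = c' := by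
        have : w ∈ e.filter fun v => C v = c' := hw ▸ Finset.mem_singleton_self w
        exact Finset.mem_filter.mp this
      have hcc : c' = c := by
        have := hsub w hwe.1
        rw [hS, Finset.mem_filter] at this
        rw [← hwe.2, this.2]
      have hfe : (e.filter fun v => C v = c') = e := by
        refine Finset.filter_eq_self.mpr (fun v hv => ?_)
        have := hsub v hv
        rw [hS, Finset.mem_filter] at this
        rw [hcc, this.2]
      have he1 : e.card = 1 := by rw [← hfe]; exact hc'
      obtain ⟨v, hv⟩ := Finset.card_eq_one.mp he1
      refine ⟨v, ⟨hv ▸ Finset.mem_singleton_self v, fun u hu => ?_⟩, fun y hy => ?_⟩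
      · rw [hv, Finset.mem_singleton] at hu; rw [hu]
      · have := hy.1
        rwa [hv, Finset.mem_singleton] at this
    · push_neg at hsub
      obtain ⟨v0, hv0e, hv0S⟩ := hsub
      obtain ⟨w, hwe, hw⟩ := Finset.exists_max_image e D ⟨v0, hv0e⟩
      refine ⟨w, ⟨hwe, hw⟩, ?_⟩
      rintro y ⟨hye, hy⟩
      have h1 : D y = D w := le_antisymm (hw y hye) (hy w hwe)
      have hw0 : D w ≠ 0 := by
        intro h
        exact hDne v0 hv0S (le_antisymm (h ▸ hw v0 hv0e) (Fin.zero_le _))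
      have hwS : w ∉ S := fun h => hw0 (hD0 w h)
      have hyS : y ∉ S := fun h => hw0 (h1 ▸ hD0 y h)
      exact hDinj y w hyS hwS h1
  have hmem : (m + 1) ∈ {j | ∃ C : V → Fin j, IsUMColoring E C} := ⟨D, hUM⟩
  have h2 : umNum E ≤ m + 1 := Nat.sInf_le hmem
  have hSle : S.card ≤ Fintype.card V := by
    rw [hS]; exact le_trans (Finset.card_filter_le _ _) Finset.card_univ.le
  have h5 : m + 1 ≤ Fintype.card V - (Fintype.card V + k - 1) / k + 1 := by
    have := hceil
    omega
  exact le_trans h2 h5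

theorem stmt0 {V : Type} [Fintype V] (E : Set (Finset V))
    (hcf : ∃ (k : ℕ) (C : V → Fin k), IsCFColoring E C) :
    umNum E ≤ Fintype.card V - (Fintype.card V + cfNum E - 1) / cfNum E + 1 := by
  classical
  by_cases hV : Nonempty V
  · have hne : {j | ∃ C : V → Fin j, IsCFColoring E C}.Nonempty := by
      obtain ⟨k, C, hC⟩ := hcf; exact ⟨k, C, hC⟩
    obtain ⟨C, hC⟩ := Nat.sInf_mem hne
    exact stmt0_aux E C hC
  · have h1 : (1 : ℕ) ∈ {j | ∃ C : V → Fin j, IsUMColoring E C} := by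
      refine ⟨fun v => 0, ?_⟩
      intro e he
      exfalso
      obtain ⟨k, C, hC⟩ := hcf
      obtain ⟨c, hc⟩ := hC e he
      obtain ⟨v, hv⟩ := Finset.card_pos.mp (by omega : 0 < (e.filter fun v => C v = c).card)
      exact hV ⟨v⟩
    exact le_trans (Nat.sInf_le h1) (Nat.le_add_left 1 _)
end
end

section
/- For every n and every k with 2 ≤ k ≤ n, there exists a hypergraph H on n vertices with χ_cf(H) = k and χ_um(H) = n − ⌈n/k⌉ + 1; hence the bound χ_um(H) ≤ n − ⌈n/χ_cf(H)⌉ + 1 is tight. -/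
open scoped Classical

noncomputable section

/-!
Split the `n` vertices into `k` classes by their residue mod `k`: every class is nonempty, has at
most `⌈n/k⌉` elements, and by pigeonhole some class has at least `⌈n/k⌉`. The hyperedges are all
sets on which this partition is conflict-free. Pairs from different classes are hyperedges, so a
conflict-free or unique-maximum colouring separates the classes; hence `χ_cf = k`. Colouring a
largest class `0` and the other vertices injectively with positive colours is unique-maximum.
Conversely, in a unique-maximum colouring a colour repeated inside a class lies below every colour
outside that class (take a triple with two vertices in the class and one outside), so all repeated
colours live in a single class `P`, and the colouring is injective on `(V \ P) ∪ {u}` for `u ∈ P`.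
-/

open Finset Function

def cfEdges {V ι : Type} [DecidableEq ι] (p : V → ι) : Set (Finset V) :=
  {e | ∃ i, #(e.filter fun v => p v = i) = 1}

section Colorings

variable {V : Type} {E : Set (Finset V)} {s : ℕ} {C : V → Fin s} {u v w : V}

theorem IsCFColoring.ne_of_pair_mem (hC : IsCFColoring E C) (huv : u ≠ v)
    (he : {u, v} ∈ E) : C u ≠ C v := by
  intro hc
  obtain ⟨c, hc1⟩ := hC _ he
  by_cases hu : C u = c
  · simp [filter_insert, filter_singleton, hu, ← hc, card_pair huv] at hc1
  · simp [filter_insert, filter_singleton, hu, ← hc] at hc1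

theorem IsUMColoring.lt_of_triple_mem (hC : IsUMColoring E C) (huv : u ≠ v) (hc : C u = C v)
    (he : {u, v, w} ∈ E) : C u < C w := by
  by_contra! hw
  have hmax : ∀ x ∈ ({u, v, w} : Finset V), C x ≤ C u := by
    simp [← hc, hw]
  obtain ⟨x, -, hx⟩ := hC _ he
  exact huv ((hx u ⟨by simp, hmax⟩).trans (hx v ⟨by simp, hc ▸ hmax⟩).symm)

theorem IsUMColoring.ne_of_pair_mem (hC : IsUMColoring E C) (huv : u ≠ v)
    (he : {u, v} ∈ E) : C u ≠ C v := fun hc =>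
  (hC.lt_of_triple_mem huv hc (w := v) (by simpa using he)).ne hc

theorem isUMColoring_of_injOn_compl {A : Set V} (hinj : Set.InjOn C Aᶜ)
    (hlt : ∀ a ∈ A, ∀ b ∉ A, C a < C b) (hE : ∀ e ∈ E, (∀ v ∈ e, v ∈ A) → #e = 1) :
    IsUMColoring E C := by
  intro e he
  by_cases hin : ∀ v ∈ e, v ∈ A
  · obtain ⟨x, rfl⟩ := card_eq_one.1 (hE e he hin)
    exact ⟨x, by simp⟩
  · obtain ⟨v, hv, hvmax⟩ := exists_max_image (e.filter (· ∉ A)) C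
      (by simpa [Finset.Nonempty] using hin)
    rw [mem_filter] at hv
    have hle : ∀ u ∈ e, C u ≤ C v := fun u hu => by
      by_cases huA : u ∈ A
      · exact (hlt u huA v hv.2).le
      · exact hvmax u (mem_filter.2 ⟨hu, huA⟩)
    refine ⟨v, ⟨hv.1, hle⟩, fun u ⟨hu, humax⟩ => ?_⟩
    have huA : u ∉ A := fun huA => (hlt u huA v hv.2).not_ge (humax v hv.1)
    exact hinj huA hv.2 (le_antisymm (hle u hu) (humax v hv.1))

end Colorings

section CFEdges

variable {V ι : Type} [DecidableEq ι] {p : V → ι} {e : Finset V} {u v w : V}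

theorem triple_mem_cfEdges (huv : p u = p v) (hw : p w ≠ p u) : {u, v, w} ∈ cfEdges p :=
  ⟨p w, by
    rw [card_eq_one]
    refine ⟨w, ?_⟩
    ext x
    simp only [mem_filter, mem_insert, mem_singleton]
    constructor
    · rintro ⟨rfl | rfl | rfl, hx⟩ <;> simp_all
    · rintro rfl
      simp⟩

theorem pair_mem_cfEdges (h : p u ≠ p v) : {u, v} ∈ cfEdges p := by
  simpa using triple_mem_cfEdges (u := u) (w := v) rfl h.symm

theorem card_eq_one_of_mem_cfEdges {i : ι} (he : e ∈ cfEdges p) (h : ∀ v ∈ e, p v = i) :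
    #e = 1 := by
  obtain ⟨j, hj⟩ := he
  obtain ⟨x, hx⟩ := card_eq_one.1 hj
  have hxe : x ∈ e.filter fun v => p v = j := hx ▸ mem_singleton_self x
  rw [mem_filter] at hxe
  have hji : j = i := hxe.2.symm.trans (h x hxe.1)
  subst hji
  rwa [filter_true_of_mem h] at hj

variable {s : ℕ} {C : V → Fin s}

theorem IsCFColoring.card_le_of_cfEdges [Fintype ι] (hp : Surjective p)
    (hC : IsCFColoring (cfEdges p) C) : Fintype.card ι ≤ s := by
  have hinj : Injective (C ∘ surjInv hp) := fun i j hij => by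
    by_contra hne
    have hp' : p (surjInv hp i) ≠ p (surjInv hp j) := by simpa [surjInv_eq hp] using hne
    exact hC.ne_of_pair_mem (ne_of_apply_ne p hp') (pair_mem_cfEdges hp') hij
  simpa using Fintype.card_le_of_injective _ hinj

theorem isCFColoring_cfEdges {k : ℕ} (p : V → Fin k) : IsCFColoring (cfEdges p) p :=
  fun _ ⟨i, hi⟩ => ⟨i, hi⟩

theorem cfNum_cfEdges {k : ℕ} (p : V → Fin k) (hp : Surjective p) : cfNum (cfEdges p) = k :=
  le_antisymm (Nat.sInf_le ⟨p, isCFColoring_cfEdges p⟩)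
    (le_csInf ⟨k, p, isCFColoring_cfEdges p⟩ fun _ ⟨_, hC⟩ => by
      simpa using hC.card_le_of_cfEdges hp)

theorem exists_isUMColoring_cfEdges [Fintype V] (p : V → ι) (i : ι) :
    ∃ C : V → Fin (Fintype.card V - #{v | p v = i} + 1), IsUMColoring (cfEdges p) C := by
  have hcard : Fintype.card {v // ¬ p v = i} = Fintype.card V - #{v | p v = i} := by
    rw [Fintype.card_subtype_compl, Fintype.card_subtype]
  let g := (Fintype.equivFin {v // ¬ p v = i}).trans (finCongr hcard)
  refine ⟨fun v => if h : p v = i then 0 else (g ⟨v, h⟩).succ,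
    isUMColoring_of_injOn_compl (A := {v | p v = i}) ?_ ?_ fun _ he =>
      card_eq_one_of_mem_cfEdges he⟩
  · intro a ha b hb hab
    simp only [Set.mem_compl_iff, Set.mem_ofPred_eq] at ha hb
    simpa [ha, hb] using hab
  · intro a ha b hb
    simp only [Set.mem_ofPred_eq] at ha hb
    simp [ha, hb, Fin.pos_iff_ne_zero]

theorem umNum_cfEdges_le [Fintype V] (p : V → ι) (i : ι) :
    umNum (cfEdges p) ≤ Fintype.card V - #{v | p v = i} + 1 :=
  Nat.sInf_le (exists_isUMColoring_cfEdges p i)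

theorem IsUMColoring.exists_injOn_of_cfEdges [Nonempty V] (hC : IsUMColoring (cfEdges p) C) :
    ∃ u, Set.InjOn C (insert u {v | p v ≠ p u}) := by
  have hfiber : ∀ {a b}, a ≠ b → C a = C b → p a = p b := fun hab hc => by
    by_contra h
    exact hC.ne_of_pair_mem hab (pair_mem_cfEdges h) hc
  -- Through the hyperedge `{a, b, w}`; consequently all repeated colours lie in a single fibre.
  have hlt : ∀ {a b w}, a ≠ b → C a = C b → p w ≠ p a → C a < C w := fun hab hc hw =>
    hC.lt_of_triple_mem hab hc (triple_mem_cfEdges (hfiber hab hc) hw)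
  by_cases hinj : Injective C
  · exact ⟨Classical.arbitrary V, hinj.injOn⟩
  obtain ⟨u, u', hc, hne⟩ := not_injective_iff.1 hinj
  have hcollision : ∀ {a b}, a ≠ b → C a = C b → p a = p u := fun hab hcab => by
    by_contra h
    exact lt_asymm (hlt hne hc h) (hlt hab hcab fun h' => h h'.symm)
  refine ⟨u, fun a ha b hb hab => by_contra fun hab' => ?_⟩
  have ha' : a = u := (Set.mem_insert_iff.1 ha).resolve_right (not_not.2 (hcollision hab' hab))
  have hb' : b = u :=
    (Set.mem_insert_iff.1 hb).resolve_right (not_not.2 (hcollision (Ne.symm hab') hab.symm))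
  exact hab' (ha'.trans hb'.symm)

theorem IsUMColoring.exists_card_sub_card_fiber_lt_of_cfEdges [Fintype V] [Nonempty V]
    (hC : IsUMColoring (cfEdges p) C) : ∃ i, Fintype.card V - #{v | p v = i} < s := by
  obtain ⟨u, hu⟩ := hC.exists_injOn_of_cfEdges
  refine ⟨p u, ?_⟩
  have hsplit : #{v | p v = p u} + #{v | p v ≠ p u} = Fintype.card V :=
    card_filter_add_card_filter_not _
  calc Fintype.card V - #{v | p v = p u} < #(insert u ({v | p v ≠ p u} : Finset V)) := by
        rw [card_insert_of_notMem (by simp)]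
        omega
    _ ≤ #(univ : Finset (Fin s)) :=
        card_le_card_of_injOn C (fun _ _ => mem_univ _) (by simpa using hu)
    _ = s := by simp

theorem le_umNum_cfEdges [Fintype V] [Nonempty V] {m : ℕ} (hm : ∀ i, #{v | p v = i} ≤ m) :
    Fintype.card V - m + 1 ≤ umNum (cfEdges p) :=
  le_csInf ⟨_, exists_isUMColoring_cfEdges p (p (Classical.arbitrary V))⟩ fun _ ⟨_, hC⟩ => by
    obtain ⟨i, hi⟩ := hC.exists_card_sub_card_fiber_lt_of_cfEdges
    have := hm i
    omega

end CFEdges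

theorem card_filter_mod_eq_le {n k : ℕ} (hk : 0 < k) (i : ℕ) :
    #{v : Fin n | v % k = i} ≤ (n + k - 1) / k := by
  have hmaps : ∀ v ∈ ({v : Fin n | v % k = i} : Finset (Fin n)),
      (v : ℕ) / k ∈ range ((n + k - 1) / k) := by
    intro v _
    rw [mem_range, Nat.lt_iff_add_one_le, Nat.le_div_iff_mul_le hk, add_one_mul]
    have := Nat.div_mul_le_self v k
    omega
  have hinj : Set.InjOn (fun v : Fin n => (v : ℕ) / k) {v | v % k = i} := fun v hv w hw hvw =>
    Fin.ext (by rw [← Nat.div_add_mod v k, ← Nat.div_add_mod w k]; simp_all)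
  simpa using card_le_card_of_injOn _ hmaps (by simpa using hinj)

theorem stmt1 (n k : ℕ) (h2 : 2 ≤ k) (hkn : k ≤ n) :
    ∃ E : Set (Finset (Fin n)),
      cfNum E = k ∧ umNum E = n - (n + k - 1) / k + 1 := by
  have hk : 0 < k := by omega
  have : Nonempty (Fin n) := ⟨⟨0, by omega⟩⟩
  let p : Fin n → Fin k := fun v => ⟨v % k, Nat.mod_lt _ hk⟩
  have hp : Surjective p := fun i => ⟨⟨i, i.2.trans_le hkn⟩, Fin.ext (Nat.mod_eq_of_lt i.2)⟩
  have hfiber : ∀ i, #{v | p v = i} = #{v : Fin n | v % k = i} := fun i => by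
    simp only [p, Fin.ext_iff]
  obtain ⟨i, hi⟩ : ∃ i, (n + k - 1) / k - 1 < #{v | p v = i} := by
    refine Fintype.exists_lt_card_fiber_of_mul_lt_card p ?_
    have := Nat.div_mul_le_self (n + k - 1) k
    rw [Fintype.card_fin, Fintype.card_fin, Nat.mul_sub_one, mul_comm]
    omega
  refine ⟨cfEdges p, cfNum_cfEdges p hp, le_antisymm ?_ ?_⟩
  · have := umNum_cfEdges_le p i
    rw [Fintype.card_fin] at this
    omega
  · simpa using le_umNum_cfEdges fun i => (hfiber i).trans_le (card_filter_mod_eq_le hk i)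
end
end

section
/- Let l ≥ 3 and let H be an l-uniform hypergraph on n vertices with conflict-free chromatic number χ_cf(H) = k. If n ≥ 2kl, then χ_um(H) ≤ n − ⌈n/k⌉ − l + 4. -/
open scoped Classical

noncomputable section

section StmtTwoAux

/-- Helper: a pointwise-maximum witness with uniqueness-at-the-top gives a UM coloring. -/
lemma um_of_pointwise {V : Type} {K : ℕ} (E : Set (Finset V)) (D : V → Fin K)
    (h : ∀ e ∈ E, ∃ v, v ∈ e ∧ (∀ u ∈ e, D u ≤ D v) ∧ (∀ u ∈ e, D u = D v → u = v)) :
    IsUMColoring E D := by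
  intro e he
  obtain ⟨v, hv, hmax, huniq⟩ := h e he
  refine ⟨v, ⟨hv, hmax⟩, ?_⟩
  rintro u ⟨hu, hmu⟩
  exact huniq u hu (le_antisymm (hmax u hu) (hmu v hv))

lemma umNum_le_one_of_empty {V : Type} (E : Set (Finset V)) (hE : E = ∅) : umNum E ≤ 1 := by
  apply Nat.sInf_le
  exact ⟨fun _ => 0, fun e he => absurd (hE ▸ he) (Set.notMem_empty e)⟩

/-- Main construction: given a CF coloring `C`, with `S` the fiber of `s₀` and `B` a set of at
most `l-2` vertices all of color `b₀ ≠ s₀`, there is a UM coloring giving `S` color 0, `B`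
color 1, and everything else distinct colors. -/
lemma stmt2_main_bound {V : Type} [Fintype V] (E : Set (Finset V)) (l k : ℕ) (hl : 3 ≤ l)
    (hunif : ∀ e ∈ E, e.card = l) (C : V → Fin k) (hC : IsCFColoring E C)
    (s₀ b₀ : Fin k) (hne : b₀ ≠ s₀) (B : Finset V)
    (hB : ∀ v ∈ B, C v = b₀) (hBcard : B.card ≤ l - 2) :
    umNum E ≤ (Finset.univ.filter fun v => C v ≠ s₀).card - B.card + 2 := by
  classical
  set T := Finset.univ.filter (fun v => C v ≠ s₀) with hT
  have hBT : B ⊆ T := by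
    intro v hv
    simp only [hT, Finset.mem_filter, Finset.mem_univ, true_and, hB v hv]
    exact hne
  set R := T \ B with hR
  have hRcard : R.card = T.card - B.card := Finset.card_sdiff_of_subset hBT
  have hfr : Fintype.card R = R.card := Fintype.card_coe R
  set r := R.card with hr
  have hlt : ∀ v : V,
      (if hv : v ∈ R then ((Fintype.equivFin R ⟨v, hv⟩ : Fin _) : ℕ) + 2
       else if v ∈ B then 1 else 0) < r + 2 := by
    intro v
    split
    · next hv =>
      have h1 := (Fintype.equivFin R ⟨v, hv⟩).isLt
      omega
    · split <;> omega
  set natD : V → ℕ := fun v =>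
    if hv : v ∈ R then ((Fintype.equivFin R ⟨v, hv⟩ : Fin _) : ℕ) + 2
    else if v ∈ B then 1 else 0 with hnatD
  set D : V → Fin (r + 2) := fun v => ⟨natD v, hlt v⟩ with hD
  have hDle : ∀ u v : V, D u ≤ D v ↔ natD u ≤ natD v := fun u v => Iff.rfl
  have hnotR : ∀ v, v ∉ R → natD v ≤ 1 := by
    intro v hv
    simp only [hnatD, dif_neg hv]
    split <;> omega
  have hinR : ∀ v (hv : v ∈ R), natD v = ((Fintype.equivFin R ⟨v, hv⟩ : Fin _) : ℕ) + 2 := by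
    intro v hv; simp only [hnatD, dif_pos hv]
  have hUM : IsUMColoring E D := by
    apply um_of_pointwise
    intro e he
    have hecard := hunif e he
    by_cases hcase : ∃ t ∈ e, t ∈ R
    · obtain ⟨t, hte, htR⟩ := hcase
      obtain ⟨v, hve, hvmax⟩ := Finset.exists_max_image e natD ⟨t, hte⟩
      have hv2 : 2 ≤ natD v := by
        have h1 := hvmax t hte
        rw [hinR t htR] at h1; omega
      have hvR : v ∈ R := by
        by_contra hnv
        have := hnotR v hnv; omega
      refine ⟨v, hve, fun u hu => (hDle u v).mpr (hvmax u hu), ?_⟩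
      intro u hu hequ
      have hequn : natD u = natD v := congrArg Fin.val hequ
      have huR : u ∈ R := by
        by_contra hnu
        have := hnotR u hnu; omega
      have heq2 : Fintype.equivFin R ⟨u, huR⟩ = Fintype.equivFin R ⟨v, hvR⟩ := by
        rw [hinR u huR, hinR v hvR] at hequn
        exact Fin.val_injective (by omega)
      have := (Fintype.equivFin R).injective heq2
      exact congrArg Subtype.val this
    · push_neg at hcase
      have hsplit : ∀ w ∈ e, w ∈ B ∨ C w = s₀ := by
        intro w hw
        have h1 := hcase w hw
        rw [hR, Finset.mem_sdiff] at h1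
        push_neg at h1
        by_cases hwT : w ∈ T
        · exact Or.inl (h1 hwT)
        · right
          simpa [hT] using hwT
      set eB := e.filter (fun v => v ∈ B) with heB
      have heBsub : eB ⊆ B := by intro w hw; exact (Finset.mem_filter.1 hw).2
      have heBe : eB ⊆ e := Finset.filter_subset _ e
      have heS : e.filter (fun v => C v = s₀) = e \ eB := by
        ext w
        simp only [heB, Finset.mem_filter, Finset.mem_sdiff, not_and]
        constructor
        · rintro ⟨hw, hcw⟩
          refine ⟨hw, fun _ hwB => ?_⟩
          have hb : b₀ = s₀ := by rw [← hB w hwB, hcw]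
          exact hne hb
        · rintro ⟨hw, hn2⟩
          rcases hsplit w hw with hwB | hws
          · exact absurd hwB (hn2 hw)
          · exact ⟨hw, hws⟩
      have hcards : (e \ eB).card = l - eB.card := by
        rw [Finset.card_sdiff_of_subset heBe, hecard]
      have heB_le : eB.card ≤ l - 2 := le_trans (Finset.card_le_card heBsub) hBcard
      have heBe_le : eB.card ≤ l := hecard ▸ Finset.card_le_card heBe
      obtain ⟨c, hc⟩ := hC e he
      have hcs : c ≠ s₀ := by
        intro h
        rw [h, heS, hcards] at hc
        omega
      have hcb : c = b₀ := by
        by_contra hcb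
        have hempty : e.filter (fun v => C v = c) = ∅ := by
          apply Finset.filter_eq_empty_iff.mpr
          intro w hw
          rcases hsplit w hw with hwB | hws
          · rw [hB w hwB]
            exact fun h => hcb h.symm
          · rw [hws]
            exact fun h => hcs h.symm
        rw [hempty] at hc
        simp at hc
      have heBfilter : e.filter (fun v => C v = b₀) = eB := by
        ext w
        simp only [heB, Finset.mem_filter, and_congr_right_iff]
        intro hw
        constructor
        · intro hcw
          rcases hsplit w hw with hwB | hws
          · exact hwB
          · exact absurd (hcw.symm.trans hws) hne
        · intro hwB; exact hB w hwB
      rw [hcb, heBfilter] at hc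
      obtain ⟨b, hb⟩ := Finset.card_eq_one.mp hc
      have hbB : b ∈ B := heBsub (hb ▸ Finset.mem_singleton_self b)
      have hbe : b ∈ e := heBe (hb ▸ Finset.mem_singleton_self b)
      have hbR : b ∉ R := by
        rw [hR, Finset.mem_sdiff]
        exact fun h => h.2 hbB
      have hbD : natD b = 1 := by simp only [hnatD, dif_neg hbR, if_pos hbB]
      refine ⟨b, hbe, ?_, ?_⟩
      · intro u hu
        apply (hDle u b).mpr
        rw [hbD]
        exact hnotR u (hcase u hu)
      · intro u hu hequ
        have hequn : natD u = natD b := congrArg Fin.val hequ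
        rw [hbD] at hequn
        have huB : u ∈ B := by
          by_contra hnu
          simp only [hnatD, dif_neg (hcase u hu), if_neg hnu] at hequn
          omega
        have h3 : u ∈ eB := Finset.mem_filter.mpr ⟨hu, huB⟩
        rw [hb, Finset.mem_singleton] at h3
        exact h3
  calc umNum E ≤ r + 2 := Nat.sInf_le ⟨D, hUM⟩
    _ = T.card - B.card + 2 := by omega

end StmtTwoAux

set_option maxHeartbeats 1000000 in
theorem stmt2 {V : Type} [Fintype V] (E : Set (Finset V)) (l k : ℕ)
    (hl : 3 ≤ l) (hunif : ∀ e ∈ E, e.card = l)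
    (hk : cfNum E = k) (hn : 2 * k * l ≤ Fintype.card V) :
    umNum E ≤ Fintype.card V - (Fintype.card V + k - 1) / k - l + 4 := by
  classical
  set n := Fintype.card V with hnV
  set q := (n + k - 1) / k with hqdef
  by_cases hE : E = ∅
  · exact le_trans (umNum_le_one_of_empty E hE) (by omega)
  obtain ⟨e₀, he₀⟩ := Set.nonempty_iff_ne_empty.mpr hE
  have he₀card := hunif e₀ he₀
  have hV : Nonempty V := by
    obtain ⟨v, -⟩ := Finset.card_pos.mp (by omega : 0 < e₀.card)
    exact ⟨v⟩
  have hset : ∃ C : V → Fin n, IsCFColoring E C := by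
    refine ⟨Fintype.equivFin V, fun e he => ?_⟩
    obtain ⟨v, hv⟩ := Finset.card_pos.mp (by rw [hunif e he]; omega : 0 < e.card)
    refine ⟨Fintype.equivFin V v, Finset.card_eq_one.mpr ⟨v, ?_⟩⟩
    ext u
    simp only [Finset.mem_filter, Finset.mem_singleton]
    constructor
    · rintro ⟨hu, hcu⟩; exact (Fintype.equivFin V).injective hcu
    · rintro rfl; exact ⟨hv, rfl⟩
  obtain ⟨C, hC⟩ : ∃ C : V → Fin k, IsCFColoring E C := by
    have hne' : {k' | ∃ C : V → Fin k', IsCFColoring E C}.Nonempty := ⟨n, hset⟩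
    have hmem := Nat.sInf_mem hne'
    rw [← hk]
    exact hmem
  have hk2 : 2 ≤ k := by
    by_contra h
    push_neg at h
    interval_cases k
    · exact (C (Classical.arbitrary V)).elim0
    · obtain ⟨c, hc⟩ := hC e₀ he₀
      have he : e₀.filter (fun v => C v = c) = e₀ :=
        Finset.filter_true_of_mem (fun v _ => Subsingleton.elim _ _)
      rw [he, he₀card] at hc
      omega
  have hkpos : 0 < k := by omega
  have : Nonempty (Fin k) := ⟨⟨0, hkpos⟩⟩
  obtain ⟨s₀, -, hs₀⟩ := Finset.exists_max_image Finset.univ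
    (fun c : Fin k => (Finset.univ.filter fun v => C v = c).card) Finset.univ_nonempty
  set m := (Finset.univ.filter fun v => C v = s₀).card with hm
  have hsum : n = ∑ c : Fin k, (Finset.univ.filter fun v => C v = c).card := by
    rw [hnV, ← Finset.card_univ]
    exact Finset.card_eq_sum_card_fiberwise (fun v _ => Finset.mem_univ (C v))
  have hnkm : n ≤ k * m := by
    rw [hsum]
    calc ∑ c : Fin k, (Finset.univ.filter fun v => C v = c).card
        ≤ ∑ _c : Fin k, m := Finset.sum_le_sum (fun c _ => hs₀ c (Finset.mem_univ c))
      _ = k * m := by simp [Finset.sum_const, Finset.card_univ, mul_comm]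
  have hq : q ≤ m := by
    have h1 : (n + k - 1) / k ≤ (k * m + (k - 1)) / k := Nat.div_le_div_right (by omega)
    have h2 : (k * m + (k - 1)) / k = m + (k - 1) / k := Nat.mul_add_div hkpos m (k - 1)
    have h3 : (k - 1) / k = 0 := Nat.div_eq_of_lt (by omega)
    omega
  have hmn : m ≤ n := by
    rw [hm, hnV, ← Finset.card_univ]
    exact Finset.card_le_card (Finset.filter_subset _ _)
  have hTcard : (Finset.univ.filter fun v => C v ≠ s₀).card = n - m := by
    have h1 : Finset.univ.filter (fun v => C v ≠ s₀)
        = Finset.univ \ (Finset.univ.filter fun v => C v = s₀) := Finset.filter_not _ _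
    rw [h1, Finset.card_sdiff_of_subset (Finset.filter_subset _ _), Finset.card_univ, ← hnV, ← hm]
  by_cases hA : ∃ c : Fin k, c ≠ s₀ ∧ l - 2 ≤ (Finset.univ.filter fun v => C v = c).card
  · obtain ⟨b₀, hbne, hbcard⟩ := hA
    obtain ⟨B, hBsub, hBcard⟩ := Finset.exists_subset_card_eq hbcard
    have hBcol : ∀ v ∈ B, C v = b₀ := fun v hv => (Finset.mem_filter.1 (hBsub hv)).2
    have hmain := stmt2_main_bound E l k hl hunif C hC s₀ b₀ hbne B hBcol (le_of_eq hBcard)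
    rw [hTcard, hBcard] at hmain
    have hsubT : (Finset.univ.filter fun v => C v = b₀)
        ⊆ Finset.univ.filter (fun v => C v ≠ s₀) := by
      intro v hv
      simp only [Finset.mem_filter, Finset.mem_univ, true_and] at hv ⊢
      rw [hv]
      exact hbne
    have hBle : l - 2 ≤ n - m := by
      rw [← hTcard]
      exact le_trans hbcard (Finset.card_le_card hsubT)
    omega
  · push_neg at hA
    have hfib : ∀ c : Fin k, c ≠ s₀ → (Finset.univ.filter fun v => C v = c).card ≤ l - 3 := by
      intro c hc
      have := hA c hc
      omega
    have hsum2 : n ≤ m + (k - 1) * (l - 3) := by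
      rw [hsum, ← Finset.insert_erase (Finset.mem_univ s₀),
        Finset.sum_insert (Finset.notMem_erase _ _)]
      have h4 : ∑ c ∈ Finset.univ.erase s₀, (Finset.univ.filter fun v => C v = c).card
          ≤ (k - 1) * (l - 3) := by
        calc ∑ c ∈ Finset.univ.erase s₀, (Finset.univ.filter fun v => C v = c).card
            ≤ (Finset.univ.erase s₀).card * (l - 3) := by
              apply Finset.sum_le_card_nsmul
              intro c hc
              exact hfib c (Finset.ne_of_mem_erase hc)
          _ = (k - 1) * (l - 3) := by
              rw [Finset.card_erase_of_mem (Finset.mem_univ _), Finset.card_univ,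
                Fintype.card_fin]
      omega
    have hqm : q + (l - 2) ≤ m := by
      have hkq : k * q ≤ n + k - 1 := by
        rw [hqdef, mul_comm]
        exact Nat.div_mul_le_self _ _
      obtain ⟨a, rfl⟩ : ∃ a, l = a + 3 := ⟨l - 3, by omega⟩
      obtain ⟨b, rfl⟩ : ∃ b, k = b + 2 := ⟨k - 2, by omega⟩
      have h6 : b + 2 - 1 = b + 1 := by omega
      have h7 : a + 3 - 3 = a := by omega
      rw [h6, h7] at hsum2
      have hkq' : (b + 2) * q ≤ n + b + 1 := by omega
      have key : (b + 2) * (q + (a + 1)) ≤ (b + 2) * m := by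
        have h5 : (b + 2) * n ≤ (b + 2) * (m + (b + 1) * a) := mul_le_mul_right hsum2 _
        have h8 : (b + 1) * (2 * (b + 2) * (a + 3)) ≤ (b + 1) * n := mul_le_mul_right hn _
        nlinarith [h5, h8, hkq']
      have := Nat.le_of_mul_le_mul_left key (by omega : 0 < b + 2)
      omega
    have hnt : Nontrivial (Fin k) := Fin.nontrivial_iff_two_le.mpr hk2
    obtain ⟨b₀, hbne⟩ := exists_ne s₀
    have hmain := stmt2_main_bound E l k hl hunif C hC s₀ b₀ hbne ∅
      (fun v hv => absurd hv (Finset.notMem_empty v)) (by simp)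
    rw [hTcard] at hmain
    simp only [Finset.card_empty, Nat.sub_zero] at hmain
    omega
end
end

section
/- For every l ≥ 3, every k ≥ 2, and every n ≥ 2kl, there exists an l-uniform hypergraph H on n vertices with χ_cf(H) = k and χ_um(H) = n − ⌈n/k⌉ − l + 4; hence the bound χ_um(H) ≤ n − ⌈n/k⌉ − l + 4 for l-uniform hypergraphs is tight. -/
open scoped Classical

noncomputable section

/-!
Partition the vertices into the `k` residue classes mod `k`, of sizes `⌊n/k⌋` and
`⌈n/k⌉ = q` (the class of `0` being one of the largest), and take as edges the `l`-sets in which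
some class occurs exactly once. One vertex together with `l - 1` vertices of other classes is an
edge, so a set containing no edge has at most `l - 2` vertices outside the class of any of its
vertices, and at most `2 (l - 2)` vertices unless it lies in a single class.

A conflict-free coloring has no monochromatic edge, so each of its color classes is inside a class
of the partition or small; as the classes have at least `2l` vertices, fewer than `k` colors cannot
cover them. In a unique-maximum coloring the colors above the largest repeated color `c` are used
once, and the set of vertices colored at most `c` has at most `q + l - 2` vertices (at most
`q + l - 3` if it is monochromatic), because no edge inside it contains two vertices of color `c`.
Coloring the class of `0` with `0`, `l - 2` vertices of another class with `1` and all other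
vertices injectively above attains the resulting bound `n - q - l + 4`.
-/

open Finset

section SingletonClassEdges

variable {V : Type} {ι : Type*} [DecidableEq ι]

def singletonClassEdges (g : V → ι) (l : ℕ) : Set (Finset V) :=
  {e | #e = l ∧ ∃ i, #{x ∈ e | g x = i} = 1}

theorem IsCFColoring.card_le_one_of_forall_eq {E : Set (Finset V)} {k : ℕ} {C : V → Fin k}
    (hC : IsCFColoring E C) {e : Finset V} (he : e ∈ E) {c : Fin k} (hc : ∀ x ∈ e, C x = c) :
    #e ≤ 1 := by
  obtain ⟨c', hc'⟩ := hC e he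
  by_cases hcc : c' = c
  · subst hcc
    rw [filter_true_of_mem hc] at hc'
    omega
  · rw [filter_false_of_mem fun x hx => by rw [hc x hx]; exact Ne.symm hcc] at hc'
    simp at hc'

theorem IsUMColoring.eq_of_forall_le {E : Set (Finset V)} {k : ℕ} {C : V → Fin k}
    (hC : IsUMColoring E C) {e : Finset V} (he : e ∈ E) {u v : V} (hu : u ∈ e) (hv : v ∈ e)
    (hmax : ∀ x ∈ e, C x ≤ C u) (huv : C u ≤ C v) : u = v :=
  (hC e he).unique ⟨hu, hmax⟩ ⟨hv, fun x hx => (hmax x hx).trans huv⟩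

theorem IsUMColoring.card_le_one_of_forall_eq {E : Set (Finset V)} {k : ℕ} {C : V → Fin k}
    (hC : IsUMColoring E C) {e : Finset V} (he : e ∈ E) {c : Fin k} (hc : ∀ x ∈ e, C x = c) :
    #e ≤ 1 :=
  card_le_one.2 fun u hu v hv =>
    hC.eq_of_forall_le he hu hv (fun x hx => by rw [hc x hx, hc u hu]) (by rw [hc u hu, hc v hv])

theorem isUMColoring_of_injOn_compl_s3 {E : Set (Finset V)} {k : ℕ} {C : V → Fin k} (S : Finset V)
    (hinj : Set.InjOn C (↑S)ᶜ) (hlt : ∀ x ∈ S, ∀ y ∉ S, C x < C y)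
    (hS : ∀ e ∈ E, e ⊆ S → ∃! v, v ∈ e ∧ ∀ u ∈ e, C u ≤ C v) :
    IsUMColoring E C := by
  intro e he
  by_cases heS : e ⊆ S
  · exact hS e he heS
  obtain ⟨v, hv, hvmax⟩ := exists_max_image (e \ S) C (sdiff_nonempty.2 heS)
  obtain ⟨hve, hvS⟩ := mem_sdiff.1 hv
  have hle : ∀ u ∈ e, C u ≤ C v := fun u hu => by
    by_cases huS : u ∈ S
    · exact (hlt u huS v hvS).le
    · exact hvmax u (mem_sdiff.2 ⟨hu, huS⟩)
  refine ⟨v, ⟨hve, hle⟩, fun y ⟨hye, hymax⟩ => ?_⟩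
  have hyS : y ∉ S := fun hyS => (hlt y hyS v hvS).not_ge (hymax v hve)
  exact hinj hyS hvS ((hle y hye).antisymm (hymax v hve))

theorem isCFColoring_singletonClassEdges {k : ℕ} (g : V → Fin k) (l : ℕ) :
    IsCFColoring (singletonClassEdges g l) g :=
  fun _ he => he.2

variable (g : V → ι) (l : ℕ)

theorem insert_mem_singletonClassEdges {w : V} {F : Finset V} (hF : ∀ x ∈ F, g x ≠ g w)
    (hl : #F + 1 = l) : insert w F ∈ singletonClassEdges g l := by
  have hw : w ∉ F := fun h => hF w h rfl
  refine ⟨by rw [card_insert_of_notMem hw, hl], g w, ?_⟩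
  rw [filter_insert, if_pos rfl, filter_false_of_mem hF, insert_empty, card_singleton]

theorem exists_mem_singletonClassEdges {S A : Finset V} {w : V} (hw : w ∈ S)
    (hA : A ⊆ insert w {x ∈ S | g x ≠ g w}) (hAl : #A + 1 ≤ l)
    (hSl : l ≤ #{x ∈ S | g x ≠ g w} + 1) :
    ∃ e ∈ singletonClassEdges g l, A ⊆ e ∧ e ⊆ S := by
  have hAw : A.erase w ⊆ {x ∈ S | g x ≠ g w} := fun x hx =>
    (mem_insert.1 (hA (mem_of_mem_erase hx))).resolve_left (ne_of_mem_erase hx)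
  obtain ⟨F, hAF, hFS, hF⟩ := exists_subsuperset_card_eq hAw
    ((card_erase_le).trans (by omega : #A ≤ l - 1)) (by omega : l - 1 ≤ _)
  refine ⟨insert w F, insert_mem_singletonClassEdges g l (fun x hx => (mem_filter.1 (hFS hx)).2)
    (by omega), fun x hx => ?_, insert_subset hw (hFS.trans (filter_subset _ _))⟩
  by_cases hxw : x = w
  · exact hxw ▸ mem_insert_self w F
  · exact mem_insert_of_mem (hAF (mem_erase.2 ⟨hxw, hx⟩))

section EdgeFree

variable {g l} {S : Finset V} (hS : ∀ e ∈ singletonClassEdges g l, ¬ e ⊆ S)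
include hS

theorem card_filter_ne_add_two_le (hl : 1 ≤ l) {w : V} (hw : w ∈ S) :
    #{x ∈ S | g x ≠ g w} + 2 ≤ l := by
  by_contra h
  obtain ⟨e, he, -, heS⟩ :=
    exists_mem_singletonClassEdges g l hw (empty_subset _) (by simpa) (by omega)
  exact hS e he heS

theorem exists_forall_eq_or_card_le (hl : 1 ≤ l) :
    (∃ i, ∀ x ∈ S, g x = i) ∨ #S ≤ 2 * (l - 2) := by
  rcases S.eq_empty_or_nonempty with rfl | ⟨w₁, hw₁⟩
  · simp
  by_cases h : ∀ x ∈ S, g x = g w₁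
  · exact Or.inl ⟨_, h⟩
  push Not at h
  obtain ⟨w₂, hw₂, hg⟩ := h
  have hcover : S ⊆ {x ∈ S | g x ≠ g w₁} ∪ {x ∈ S | g x ≠ g w₂} := fun x hx => by
    by_cases hx₁ : g x = g w₁
    · exact mem_union_right _ (mem_filter.2 ⟨hx, hx₁ ▸ Ne.symm hg⟩)
    · exact mem_union_left _ (mem_filter.2 ⟨hx, hx₁⟩)
  have := (card_le_card hcover).trans (card_union_le _ _)
  have := card_filter_ne_add_two_le hS hl hw₁
  have := card_filter_ne_add_two_le hS hl hw₂
  right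
  omega

end EdgeFree

variable [Fintype V]

/-- A color class not inside one class of `g` has at most `2 (l - 2)` vertices, so such colors
cover at most as many classes as there are of them; every other class contains a whole color
class of its own. -/
theorem card_le_of_isCFColoring [Fintype ι] {s j : ℕ} (hl : 2 ≤ l) (hs : 0 < s)
    (hls : 2 * (l - 2) ≤ s) (hg : ∀ i, s ≤ #{x | g x = i}) {C : V → Fin j}
    (hC : IsCFColoring (singletonClassEdges g l) C) : Fintype.card ι ≤ j := by
  have hmixed : ∀ c, (∃ i, ∀ x ∈ ({x | C x = c} : Finset V), g x = i) ∨
      #{x | C x = c} ≤ 2 * (l - 2) := fun c =>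
    exists_forall_eq_or_card_le (fun e he heS => by
      have := hC.card_le_one_of_forall_eq he (c := c) fun x hx => (mem_filter.1 (heS hx)).2
      have := he.1
      omega) (by omega)
  set M : Finset (Fin j) := {c | ¬ ∃ i, ∀ x ∈ ({x | C x = c} : Finset V), g x = i}
  set B : Finset ι := {i | ∀ x, g x = i → C x ∈ M}
  have hBc : #Bᶜ ≤ #Mᶜ := by
    refine card_le_card_of_forall_subsingleton (fun i c => ∃ x, g x = i ∧ C x = c)
      (fun i hi => ?_) (fun c hc => ?_)
    · simp only [B, mem_compl, mem_filter, mem_univ, true_and, not_forall] at hi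
      obtain ⟨x, hx, hxM⟩ := hi
      exact ⟨C x, mem_compl.2 hxM, x, hx, rfl⟩
    · simp only [M, mem_compl, mem_filter, mem_univ, true_and, not_not] at hc
      obtain ⟨i₀, hi₀⟩ := hc
      rintro i₁ ⟨-, x₁, rfl, hx₁⟩ i₂ ⟨-, x₂, rfl, hx₂⟩
      rw [hi₀ x₁ (by simp [hx₁]), hi₀ x₂ (by simp [hx₂])]
  have hB : #B ≤ #M := by
    refine Nat.le_of_mul_le_mul_right ?_ hs
    calc #B * s ≤ ∑ i ∈ B, #{x | g x = i} := by
          rw [← smul_eq_mul]; exact card_nsmul_le_sum _ _ _ fun i _ => hg i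
      _ = #{x | g x ∈ B} := sum_card_fiberwise_eq_card_filter _ _ _
      _ ≤ #{x | C x ∈ M} := card_le_card fun x hx => by
          simp only [B, mem_filter, mem_univ, true_and] at hx ⊢
          exact hx x rfl
      _ = ∑ c ∈ M, #{x | C x = c} := (sum_card_fiberwise_eq_card_filter _ _ _).symm
      _ ≤ #M * (2 * (l - 2)) := by
          rw [← smul_eq_mul]
          refine sum_le_card_nsmul _ _ _ fun c hc => ?_
          simp only [M, mem_filter, mem_univ, true_and] at hc
          exact (hmixed c).resolve_left fun ⟨i, hi⟩ =>
            hc ⟨i, fun x hx => hi x (by simpa using hx)⟩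
      _ ≤ #M * s := Nat.mul_le_mul_left _ hls
  calc Fintype.card ι = #Bᶜ + #B := (card_compl_add_card B).symm
    _ ≤ #Mᶜ + #M := add_le_add hBc hB
    _ = j := by rw [card_compl_add_card, Fintype.card_fin]

theorem exists_inter_eq_singleton {a b : ι} {L : Finset V} (hL : ∀ x ∈ L, g x = b)
    (hLl : #L + 2 ≤ l) {e : Finset V} (he : e ∈ singletonClassEdges g l)
    (heS : e ⊆ ({x | g x = a} : Finset V) ∪ L) : ∃ w, e ∩ L = {w} := by
  obtain ⟨hcard, i, hi⟩ := he
  obtain ⟨w, hw⟩ := card_eq_one.1 hi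
  obtain ⟨hwe, hwi⟩ := mem_filter.1 (hw ▸ mem_singleton_self w)
  have honly : ∀ x ∈ e, g x = i → x = w := fun x hx hgx =>
    mem_singleton.1 (hw ▸ mem_filter.2 ⟨hx, hgx⟩)
  by_cases hwa : g w = a
  · have hsub : e.erase w ⊆ L := fun x hx => by
      obtain ⟨hxw, hxe⟩ := mem_erase.1 hx
      refine (mem_union.1 (heS hxe)).resolve_left fun hxa => hxw (honly x hxe ?_)
      rw [(mem_filter.1 hxa).2, ← hwa, hwi]
    have := card_le_card hsub
    rw [card_erase_of_mem hwe] at this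
    omega
  have hwL : w ∈ L := (mem_union.1 (heS hwe)).resolve_left fun h => hwa (mem_filter.1 h).2
  refine ⟨w, ext fun x => ⟨fun hx => ?_, fun hx => ?_⟩⟩
  · obtain ⟨hxe, hxL⟩ := mem_inter.1 hx
    exact mem_singleton.2 (honly x hxe (by rw [hL x hxL, ← hL w hwL, hwi]))
  · rw [mem_singleton.1 hx]
    exact mem_inter.2 ⟨hwe, hwL⟩

theorem exists_isUMColoring_singletonClassEdges {a b : ι} (hab : a ≠ b) {L : Finset V}
    (hL : ∀ x ∈ L, g x = b) (hLl : #L + 2 ≤ l) :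
    ∃ C : V → Fin (Fintype.card V - #{x | g x = a} - #L + 2),
      IsUMColoring (singletonClassEdges g l) C := by
  set S : Finset V := ({x | g x = a} : Finset V) ∪ L
  have hdisj : Disjoint ({x | g x = a} : Finset V) L := disjoint_left.2 fun x hxa hxL =>
    hab ((mem_filter.1 hxa).2.symm.trans (hL x hxL))
  have hR : #Sᶜ + 2 = Fintype.card V - #{x | g x = a} - #L + 2 := by
    rw [card_compl, card_union_of_disjoint hdisj, Nat.sub_sub]
  let σ := Sᶜ.equivFin
  let c : V → ℕ := fun x =>
    if h : x ∈ Sᶜ then σ ⟨x, h⟩ + 2 else if x ∈ L then 1 else 0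
  have hc : ∀ x, c x < #Sᶜ + 2 := fun x => by
    by_cases h : x ∈ Sᶜ
    · simp only [c, dif_pos h, add_lt_add_iff_right, Fin.is_lt]
    · simp only [c, dif_neg h]; split_ifs <;> omega
  have hcS : ∀ x ∈ S, c x = if x ∈ L then 1 else 0 := fun x hx =>
    dif_neg fun h => mem_compl.1 h hx
  refine ⟨fun x => ⟨c x, hR ▸ hc x⟩, isUMColoring_of_injOn_compl_s3 S ?_ ?_ ?_⟩
  · intro x hx y hy hxy
    simp only [Set.mem_compl_iff, mem_coe] at hx hy
    simp only [Fin.mk.injEq, c, dif_pos (mem_compl.2 hx), dif_pos (mem_compl.2 hy),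
      add_left_inj, Fin.val_inj, EmbeddingLike.apply_eq_iff_eq, Subtype.mk.injEq] at hxy
    exact hxy
  · intro x hx y hy
    simp only [Fin.mk_lt_mk, hcS x hx, c, dif_pos (mem_compl.2 hy)]
    split_ifs <;> omega
  · intro e he heS
    obtain ⟨w, hw⟩ := exists_inter_eq_singleton g l hL hLl he heS
    have hwL : w ∈ L := (mem_inter.1 (hw ▸ mem_singleton_self w)).2
    have hwe : w ∈ e := (mem_inter.1 (hw ▸ mem_singleton_self w)).1
    refine ⟨w, ⟨hwe, fun x hx => ?_⟩, fun y ⟨hye, hymax⟩ => ?_⟩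
    · simp only [Fin.mk_le_mk, hcS x (heS hx), hcS w (heS hwe), if_pos hwL]
      split_ifs <;> omega
    · have hyL : y ∈ L := by
        by_contra hyL
        have := hymax w hwe
        simp only [Fin.mk_le_mk, hcS y (heS hye), hcS w (heS hwe), if_pos hwL, if_neg hyL] at this
        omega
      exact mem_singleton.1 (hw ▸ mem_inter.2 ⟨hye, hyL⟩)

theorem card_le_card_filter_ne_add {q : ℕ} (hq : ∀ i, #{x | g x = i} ≤ q) (Y : Finset V)
    (i : ι) : #Y ≤ #{x ∈ Y | g x ≠ i} + q := by
  have := card_filter_add_card_filter_not (s := Y) (p := fun x => g x = i)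
  have := (card_le_card (monotone_filter_left (fun x => g x = i) (subset_univ Y))).trans (hq i)
  simp only [ne_eq]
  omega

section UMLower

variable {g l} {q j : ℕ} (hl : 3 ≤ l) (hq : ∀ i, #{x | g x = i} ≤ q) {C : V → Fin j}
  (hC : IsUMColoring (singletonClassEdges g l) C)
include hl hq hC

theorem card_add_two_le_of_isUMColoring {Y : Finset V} {u v : V} (hu : u ∈ Y) (hv : v ∈ Y)
    (huv : u ≠ v) (hCuv : C u = C v) (hmax : ∀ x ∈ Y, C x ≤ C u) : #Y + 2 ≤ q + l := by
  have hbound : ∀ w ∈ Y, u ∈ insert w {x ∈ Y | g x ≠ g w} →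
      v ∈ insert w {x ∈ Y | g x ≠ g w} → #Y + 2 ≤ q + l := fun w hw hu' hv' => by
    have : #{x ∈ Y | g x ≠ g w} + 2 ≤ l := by
      by_contra h
      obtain ⟨e, he, hue, heY⟩ := exists_mem_singletonClassEdges g l hw
        (insert_subset hu' (singleton_subset_iff.2 hv')) (by rw [card_pair huv]; omega)
        (by omega)
      exact huv (hC.eq_of_forall_le he (hue (mem_insert_self _ _))
        (hue (mem_insert_of_mem (mem_singleton_self _))) (fun x hx => hmax x (heY hx)) hCuv.le)
    have := card_le_card_filter_ne_add g hq Y (g w)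
    omega
  by_cases hguv : g u = g v
  · by_cases hY : ∃ w ∈ Y, g w ≠ g u
    · obtain ⟨w, hw, hgw⟩ := hY
      exact hbound w hw (mem_insert_of_mem (mem_filter.2 ⟨hu, Ne.symm hgw⟩))
        (mem_insert_of_mem (mem_filter.2 ⟨hv, hguv ▸ Ne.symm hgw⟩))
    · push Not at hY
      have := (card_le_card fun x hx => mem_filter.2 ⟨mem_univ x, hY x hx⟩).trans (hq (g u))
      omega
  · exact hbound v hv (mem_insert_of_mem (mem_filter.2 ⟨hu, hguv⟩)) (mem_insert_self _ _)

theorem card_add_four_le_card_image_of_isUMColoring (hlq : l ≤ q + 1) {Y : Finset V}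
    {u v : V} (hu : u ∈ Y) (hv : v ∈ Y) (huv : u ≠ v) (hCuv : C u = C v)
    (hmax : ∀ x ∈ Y, C x ≤ C u) :
    #Y + 4 ≤ #(Y.image C) + q + l := by
  have hpos : 1 ≤ #(Y.image C) := card_pos.2 ⟨C u, mem_image_of_mem C hu⟩
  by_cases h2 : 2 ≤ #(Y.image C)
  · have := card_add_two_le_of_isUMColoring hl hq hC hu hv huv hCuv hmax
    omega
  have hmono : ∀ x ∈ Y, C x = C u := fun x hx =>
    card_le_one.1 (by omega) _ (mem_image_of_mem C hx) _ (mem_image_of_mem C hu)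
  have hfree : ∀ e ∈ singletonClassEdges g l, ¬ e ⊆ Y := fun e he heY => by
    have := hC.card_le_one_of_forall_eq he fun x hx => hmono x (heY hx)
    have := he.1
    omega
  rcases exists_forall_eq_or_card_le hfree (by omega) with ⟨i, hi⟩ | hsmall
  · have := (card_le_card fun x hx => mem_filter.2 ⟨mem_univ x, hi x hx⟩).trans (hq i)
    omega
  · omega

end UMLower

theorem card_add_four_le_of_isUMColoring {q j : ℕ} (hl : 3 ≤ l) (hlq : l ≤ q + 1)
    (hq : ∀ i, #{x | g x = i} ≤ q) {C : V → Fin j}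
    (hC : IsUMColoring (singletonClassEdges g l) C) : Fintype.card V + 4 ≤ j + q + l := by
  by_cases hinj : Function.Injective C
  · have := Fintype.card_le_of_injective C hinj
    rw [Fintype.card_fin] at this
    omega
  obtain ⟨u₀, v₀, hC₀, huv₀⟩ := Function.not_injective_iff.1 hinj
  set Rep : Finset (Fin j) := {c | 1 < #{x | C x = c}}
  have hRep : Rep.Nonempty :=
    ⟨C u₀, mem_filter.2 ⟨mem_univ _,
      one_lt_card.2 ⟨u₀, by simp, v₀, by simp [hC₀], huv₀⟩⟩⟩
  set c := Rep.max' hRep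
  obtain ⟨u, hu, v, hv, huv⟩ := one_lt_card.1 (mem_filter.1 (Rep.max'_mem hRep)).2
  replace hu : C u = c := (mem_filter.1 hu).2
  replace hv : C v = c := (mem_filter.1 hv).2
  set Y : Finset V := {x | C x ≤ c}
  have hinjY : Set.InjOn C ↑Yᶜ := fun x hx y _ hxy => by_contra fun hne =>
    mem_compl.1 hx (mem_filter.2 ⟨mem_univ x, Rep.le_max' _ (mem_filter.2 ⟨mem_univ _,
      one_lt_card.2 ⟨x, by simp, y, by simp [hxy], hne⟩⟩)⟩)
  have hdisj : Disjoint (Yᶜ.image C) (Y.image C) := disjoint_left.2 fun _ h₁ h₂ => by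
    obtain ⟨x, hx, rfl⟩ := mem_image.1 h₁
    obtain ⟨y, hy, hxy⟩ := mem_image.1 h₂
    exact mem_compl.1 hx (mem_filter.2 ⟨mem_univ x, hxy ▸ (mem_filter.1 hy).2⟩)
  have hcount : #Yᶜ + #(Y.image C) ≤ j := by
    rw [← card_image_of_injOn hinjY, ← card_union_of_disjoint hdisj]
    simpa using card_le_univ (Yᶜ.image C ∪ Y.image C)
  have := card_add_four_le_card_image_of_isUMColoring hl hq hC hlq (Y := Y)
    (mem_filter.2 ⟨mem_univ u, hu.le⟩) (mem_filter.2 ⟨mem_univ v, hv.le⟩) huv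
    (hu.trans hv.symm) fun x hx => hu ▸ (mem_filter.1 hx).2
  have := card_compl_add_card Y
  omega

end SingletonClassEdges

theorem add_sub_one_div_eq_div_add_ite (n : ℕ) {k : ℕ} (hk : 0 < k) :
    (n + k - 1) / k = n / k + if 0 < n % k then 1 else 0 := by
  have h := Nat.div_add_mod n k
  have hr := Nat.mod_lt n hk
  generalize n / k = a at h ⊢
  generalize n % k = r at *
  subst h
  apply Nat.div_eq_of_lt_le
  · split_ifs <;> rw [add_mul, mul_comm] <;> omega
  · split_ifs <;> rw [add_mul, add_mul, mul_comm] <;> omega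

section ResidueClasses

variable (n k : ℕ) [NeZero k]

theorem card_filter_ofNat_eq (i : Fin k) :
    #{v : Fin n | Fin.ofNat k v = i} = n / k + if i.val < n % k then 1 else 0 := by
  have hi : i.val % k = i.val := Nat.mod_eq_of_lt i.isLt
  have hcount : #{v : Fin n | Fin.ofNat k v = i} = #{x ∈ range n | x ≡ i [MOD k]} := by
    rw [← Nat.Iio_eq_range, ← Fin.map_valEmbedding_univ, filter_map, card_map]
    congr 1
    ext v
    simp [Fin.ext_iff, Nat.ModEq, hi]
  rw [hcount, ← Nat.count_eq_card_filter_range, Nat.count_modEq_card n (NeZero.pos k), hi]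

theorem div_le_card_filter_ofNat (i : Fin k) : n / k ≤ #{v : Fin n | Fin.ofNat k v = i} := by
  rw [card_filter_ofNat_eq]
  exact Nat.le_add_right _ _

theorem card_filter_ofNat_le (i : Fin k) :
    #{v : Fin n | Fin.ofNat k v = i} ≤ (n + k - 1) / k := by
  rw [card_filter_ofNat_eq, add_sub_one_div_eq_div_add_ite n (NeZero.pos k)]
  split_ifs <;> omega

theorem card_filter_ofNat_eq_zero : #{v : Fin n | Fin.ofNat k v = 0} = (n + k - 1) / k := by
  rw [card_filter_ofNat_eq, add_sub_one_div_eq_div_add_ite n (NeZero.pos k), Fin.val_zero]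

end ResidueClasses

theorem stmt3 (l k n : ℕ) (hl : 3 ≤ l) (hk : 2 ≤ k) (hn : 2 * k * l ≤ n) :
    ∃ E : Set (Finset (Fin n)),
      (∀ e ∈ E, e.card = l) ∧ cfNum E = k ∧
        umNum E = n - (n + k - 1) / k - l + 4 := by
  have : NeZero k := ⟨by omega⟩
  set q := (n + k - 1) / k
  set g : Fin n → Fin k := fun v => Fin.ofNat k v
  have hlk : 2 * l ≤ n / k := (Nat.le_div_iff_mul_le (by omega)).2 (by linarith)
  have hkn : 2 * (n / k) ≤ n := (Nat.mul_le_mul_right _ hk).trans (Nat.mul_div_le n k)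
  have hq : n / k ≤ q ∧ q ≤ n / k + 1 := by
    have : q = n / k + if 0 < n % k then 1 else 0 := add_sub_one_div_eq_div_add_ite n (by omega)
    split_ifs at this <;> omega
  refine ⟨singletonClassEdges g l, fun e he => he.1, ?_, ?_⟩
  · refine IsLeast.csInf_eq
      ⟨⟨g, isCFColoring_singletonClassEdges g l⟩, fun j ⟨C, hC⟩ => ?_⟩
    simpa using card_le_of_isCFColoring g l (by omega) (by omega : 0 < n / k) (by omega)
      (div_le_card_filter_ofNat n k) hC
  · obtain ⟨L, hL1, hL⟩ := exists_subset_card_eq ((by omega : l - 2 ≤ n / k).trans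
      (div_le_card_filter_ofNat n k 1))
    have hUM := exists_isUMColoring_singletonClassEdges g l (a := 0) (b := 1)
      (by rw [ne_eq, Fin.zero_eq_one_iff]; omega)
      (fun x hx => (mem_filter.1 (hL1 hx)).2) (by omega)
    rw [card_filter_ofNat_eq_zero, hL, Fintype.card_fin,
      show n - q - (l - 2) + 2 = n - q - l + 4 by omega] at hUM
    obtain ⟨C, hC⟩ := hUM
    refine IsLeast.csInf_eq ⟨⟨C, hC⟩, fun j ⟨C', hC'⟩ => ?_⟩
    have := card_add_four_le_of_isUMColoring g l hl (by omega) (card_filter_ofNat_le n k) hC'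
    rw [Fintype.card_fin] at this
    omega
end
end

section
/- For every n ≥ 1, the path graph P_n on n vertices satisfies UM(P_n) = CF(P_n) = ODD(P_n) = ⌈log₂(n + 1)⌉. -/
open scoped Classical

noncomputable section

/-! The ruler coloring, which gives the `i`-th vertex (counting from 1) the 2-adic valuation
of `i`, is a unique-maximum coloring of the path with `⌈log₂(n + 1)⌉` colors: two points of an
interval with the same valuation `t` are odd multiples of `2^t`, so they enclose an even multiple
of `2^t`. Conversely, given an odd coloring with `k` colors, the `n + 1` prefixes of the path
have pairwise distinct parity vectors of color counts in `(ZMod 2)^k`, because the segment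
between two prefixes has a color of odd multiplicity; hence `n + 1 ≤ 2^k`. Since unique-maximum
colorings are conflict-free and conflict-free colorings are odd, all three numbers agree. -/

open Finset

section Hypergraph

variable {V : Type} {E : Set (Finset V)} {k : ℕ} {C : V → Fin k}

theorem IsUMColoring.isCFColoring (h : IsUMColoring E C) : IsCFColoring E C := by
  intro e he
  obtain ⟨v, ⟨hv, hmax⟩, huniq⟩ := h e he
  refine ⟨C v, card_eq_one.2 ⟨v, ?_⟩⟩
  ext u
  simp only [mem_filter, mem_singleton]
  constructor
  · rintro ⟨hu, hc⟩
    exact huniq u ⟨hu, fun w hw => hc ▸ hmax w hw⟩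
  · rintro rfl
    exact ⟨hv, rfl⟩

theorem IsCFColoring.isOddColoring (h : IsCFColoring E C) : IsOddColoring E C := fun e he =>
  let ⟨c, hc⟩ := h e he
  ⟨c, hc ▸ odd_one⟩

theorem umNum_eq_and_cfNum_eq_and_oddNum_eq {K : ℕ} (hUM : ∃ C : V → Fin K, IsUMColoring E C)
    (hOdd : ∀ k (C : V → Fin k), IsOddColoring E C → K ≤ k) :
    umNum E = K ∧ cfNum E = K ∧ oddNum E = K := by
  obtain ⟨C, hC⟩ := hUM
  refine ⟨IsLeast.csInf_eq ⟨⟨C, hC⟩, ?_⟩, IsLeast.csInf_eq ⟨⟨C, hC.isCFColoring⟩, ?_⟩,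
    IsLeast.csInf_eq ⟨⟨C, hC.isCFColoring.isOddColoring⟩, ?_⟩⟩
  · rintro k ⟨C', hC'⟩
    exact hOdd k C' hC'.isCFColoring.isOddColoring
  · rintro k ⟨C', hC'⟩
    exact hOdd k C' hC'.isOddColoring
  · rintro k ⟨C', hC'⟩
    exact hOdd k C' hC'

end Hypergraph

theorem existsUnique_argmax_Icc {α β : Type*} [LinearOrder α] [LocallyFiniteOrder α]
    [LinearOrder β] {f : α → β}
    (hf : ∀ x y, x < y → f x = f y → ∃ z, x < z ∧ z < y ∧ f x < f z) {a b : α} (hab : a ≤ b) :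
    ∃! m, m ∈ Icc a b ∧ ∀ u ∈ Icc a b, f u ≤ f m := by
  obtain ⟨m, hm, hmax⟩ := exists_max_image (Icc a b) f ⟨a, left_mem_Icc.2 hab⟩
  have no_tie : ∀ x ∈ Icc a b, ∀ y ∈ Icc a b, x < y → f x = f m → f y = f m → False := by
    intro x hx y hy hxy hxm hym
    obtain ⟨z, hxz, hzy, hfz⟩ := hf x y hxy (hxm.trans hym.symm)
    have hz : z ∈ Icc a b :=
      mem_Icc.2 ⟨(mem_Icc.1 hx).1.trans hxz.le, hzy.le.trans (mem_Icc.1 hy).2⟩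
    exact (hxm ▸ hfz).not_ge (hmax z hz)
  refine ⟨m, ⟨hm, hmax⟩, fun m' ⟨hm', hmax'⟩ => ?_⟩
  have hm'm : f m' = f m := le_antisymm (hmax m' hm') (hmax' m hm)
  rcases lt_trichotomy m' m with h | h | h
  · exact (no_tie m' hm' m hm h hm'm rfl).elim
  · exact h
  · exact (no_tie m hm m' hm' h rfl hm'm).elim

theorem exists_between_padicValNat_two_lt {m₁ m₂ : ℕ} (h₀ : 0 < m₁) (h : m₁ < m₂)
    (heq : padicValNat 2 m₁ = padicValNat 2 m₂) :
    ∃ m, m₁ < m ∧ m < m₂ ∧ padicValNat 2 m₁ < padicValNat 2 m := by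
  set t := padicValNat 2 m₁
  obtain ⟨a, ha⟩ : 2 ^ t ∣ m₁ := pow_padicValNat_dvd
  obtain ⟨b, hb⟩ : 2 ^ t ∣ m₂ := heq ▸ pow_padicValNat_dvd
  have ha_odd : ¬ 2 ∣ a := fun ⟨c, hc⟩ =>
    pow_succ_padicValNat_not_dvd h₀.ne' (show 2 ^ (t + 1) ∣ m₁ from ⟨c, by rw [ha, hc]; ring⟩)
  have hb_odd : ¬ 2 ∣ b := fun ⟨c, hc⟩ =>
    pow_succ_padicValNat_not_dvd (h₀.trans h).ne'
      (show 2 ^ (padicValNat 2 m₂ + 1) ∣ m₂ from ⟨c, by rw [← heq, hb, hc]; ring⟩)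
  have hab : a < b := Nat.lt_of_mul_lt_mul_left (ha ▸ hb ▸ h)
  obtain ⟨c, hc⟩ : 2 ∣ a + 1 := by omega
  refine ⟨2 ^ t * (a + 1), ha ▸ Nat.mul_lt_mul_of_pos_left (by omega) (by positivity),
    hb ▸ Nat.mul_lt_mul_of_pos_left (by omega) (by positivity), ?_⟩
  rw [← Nat.add_one_le_iff, ← padicValNat_dvd_iff_le (by positivity)]
  exact ⟨c, by rw [hc, pow_succ]; ring⟩

theorem SimpleGraph.Walk.IsPath.mem_support_pathGraph_iff {n : ℕ} {u v : Fin n}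
    {p : (SimpleGraph.pathGraph n).Walk u v} (hp : p.IsPath) {x : Fin n} :
    x ∈ p.support ↔ x ∈ Icc (min u v) (max u v) := by
  induction p generalizing x with
  | nil => simp
  | @cons u w v h q ih =>
    rw [SimpleGraph.Walk.cons_isPath_iff] at hp
    have huq : u ∉ Icc (min w v) (max w v) := fun hu => hp.2 ((ih hp.1).2 hu)
    have hadj := SimpleGraph.pathGraph_adj.mp h
    simp only [mem_Icc, min_le_iff, le_max_iff, Fin.le_def, not_and_or, not_or, not_le] at huq
    rw [SimpleGraph.Walk.support_cons, List.mem_cons, ih hp.1]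
    simp only [mem_Icc, min_le_iff, le_max_iff, Fin.le_def, Fin.ext_iff]
    omega

theorem pathEdges_pathGraph (n : ℕ) :
    pathEdges (SimpleGraph.pathGraph n) = {S | ∃ a b : Fin n, a ≤ b ∧ S = Icc a b} := by
  ext S
  constructor
  · rintro ⟨u, v, p, hp, rfl⟩
    refine ⟨min u v, max u v, min_le_max, ?_⟩
    ext
    simp only [List.mem_toFinset, hp.mem_support_pathGraph_iff]
  · rintro ⟨a, b, hab, rfl⟩
    obtain ⟨w⟩ := SimpleGraph.pathGraph_preconnected n a b
    refine ⟨a, b, w.toPath, w.toPath.2, ?_⟩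
    ext
    simp only [List.mem_toFinset, w.toPath.2.mem_support_pathGraph_iff, min_eq_left hab,
      max_eq_right hab]

theorem padicValNat_two_lt_clog {m n : ℕ} (hm : 0 < m) (hmn : m ≤ n) :
    padicValNat 2 m < Nat.clog 2 (n + 1) := by
  rw [Nat.lt_clog_iff_pow_lt one_lt_two]
  exact (Nat.le_of_dvd hm pow_padicValNat_dvd).trans_lt (Nat.lt_succ_of_le hmn)

def rulerColoring (n : ℕ) (i : Fin n) : Fin (Nat.clog 2 (n + 1)) :=
  ⟨padicValNat 2 (i + 1), padicValNat_two_lt_clog i.succ_pos i.isLt⟩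

theorem isUMColoring_rulerColoring (n : ℕ) :
    IsUMColoring (pathEdges (SimpleGraph.pathGraph n)) (rulerColoring n) := by
  rw [pathEdges_pathGraph]
  rintro _ ⟨a, b, hab, rfl⟩
  refine existsUnique_argmax_Icc (fun x y hxy hxy' => ?_) hab
  obtain ⟨m, hxm, hmy, hm⟩ := exists_between_padicValNat_two_lt (Nat.succ_pos x)
    (Nat.succ_lt_succ hxy) (Fin.mk.inj_iff.1 hxy')
  have hm1 : m - 1 + 1 = m := by omega
  refine ⟨⟨m - 1, by omega⟩, Fin.mk_lt_mk.2 (by omega), Fin.mk_lt_mk.2 (by omega), ?_⟩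
  exact Fin.mk_lt_mk.2 (by rwa [hm1])

def prefixParity {n k : ℕ} (C : Fin n → Fin k) (i : ℕ) (c : Fin k) : ZMod 2 :=
  #{v | v.val < i ∧ C v = c}

theorem prefixParity_sub_prefixParity {n k : ℕ} (C : Fin n → Fin k) (c : Fin k) {i j : ℕ}
    (hij : i ≤ j) :
    prefixParity C j c - prefixParity C i c = #{v | i ≤ v.val ∧ v.val < j ∧ C v = c} := by
  have hsplit := card_filter_add_card_filter_not
    (s := ({v | v.val < j ∧ C v = c} : Finset (Fin n))) (fun v => v.val < i)
  rw [sub_eq_iff_eq_add', prefixParity, prefixParity, ← Nat.cast_add, ← hsplit, filter_filter,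
    filter_filter]
  congr 3 <;> ext v <;> simp only [mem_filter, mem_univ, true_and] <;> omega

theorem two_pow_ge_of_isOddColoring {n k : ℕ} {C : Fin n → Fin k}
    (h : IsOddColoring (pathEdges (SimpleGraph.pathGraph n)) C) : n + 1 ≤ 2 ^ k := by
  have hne : ∀ i j : Fin (n + 1), i < j → prefixParity C i ≠ prefixParity C j := by
    intro i j hij heq
    have hedge : Icc (⟨i, by omega⟩ : Fin n) ⟨j - 1, by omega⟩ ∈
        pathEdges (SimpleGraph.pathGraph n) := by
      rw [pathEdges_pathGraph]
      exact ⟨_, _, Fin.mk_le_mk.2 (by omega), rfl⟩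
    obtain ⟨c, hc⟩ := h _ hedge
    have hseg : filter (C · = c) (Icc (⟨i, by omega⟩ : Fin n) ⟨j - 1, by omega⟩) =
        ({v | i.val ≤ v.val ∧ v.val < j.val ∧ C v = c} : Finset (Fin n)) := by
      ext v
      simp only [mem_filter, mem_Icc, mem_univ, true_and, Fin.le_def]
      omega
    have hcount := prefixParity_sub_prefixParity C c hij.le
    rw [heq, sub_self, ← hseg, eq_comm, ZMod.natCast_eq_zero_iff_even] at hcount
    exact Nat.not_even_iff_odd.2 hc hcount
  simpa using Fintype.card_le_of_injective _ (Function.Injective.of_lt_imp_ne hne)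

theorem stmt4_general (n : ℕ) :
    UM (SimpleGraph.pathGraph n) = Nat.clog 2 (n + 1) ∧
    CF (SimpleGraph.pathGraph n) = Nat.clog 2 (n + 1) ∧
    ODD (SimpleGraph.pathGraph n) = Nat.clog 2 (n + 1) :=
  umNum_eq_and_cfNum_eq_and_oddNum_eq ⟨rulerColoring n, isUMColoring_rulerColoring n⟩
    fun _ _ hC => (Nat.clog_le_iff_le_pow one_lt_two).2 (two_pow_ge_of_isOddColoring hC)

theorem stmt4 (n : ℕ) (hn : 1 ≤ n) :
    UM (SimpleGraph.pathGraph n) = Nat.clog 2 (n + 1) ∧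
    CF (SimpleGraph.pathGraph n) = Nat.clog 2 (n + 1) ∧
    ODD (SimpleGraph.pathGraph n) = Nat.clog 2 (n + 1) :=
  stmt4_general n
end
end

section
/- Let B* be a subdivision of the complete binary tree B_d and let the vertices of B* be colored arbitrarily with k colors. Then there exists a vector (a_1, …, a_k) of nonnegative integers with a_1 + ⋯ + a_k = d such that for every i ∈ {1,…,k}, B* contains, as a subgraph, a subdivision of B_{a_i} all of whose branch vertices are colored with color i. -/
open scoped Classical

noncomputable section

/-!
Since containing a subdivision is transitive (expand each path of `B_d` into the paths of
`B*` that replace its edges), it suffices to treat `B* = B_d`, coloured through its branch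
vertices. There we induct over subtrees: the subtree at a vertex `l` with `n` levels contains,
for a vector `a` with sum `n` and every colour `i`, a subdivision of `B_{a i}` with all branch
vertices of colour `i`. At `l` of colour `c`, take the vector of the child with the smaller
`c`-entry and raise that entry by one: the two children's `c`-coloured subdivisions of that
depth, joined below `l`, form a subdivision of one more level.
-/

namespace SimpleGraph.Walk

variable {V W : Type} {G : SimpleGraph V} {H : SimpleGraph W} {f : V → W}
  (P : ∀ u v, G.Adj u v → H.Walk (f u) (f v))

def expand : ∀ {u v : V}, G.Walk u v → H.Walk (f u) (f v)
  | _, _, nil => nil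
  | _, _, cons h p => (P _ _ h).append (expand p)

variable {P}

theorem mem_support_expand {u v : V} (p : G.Walk u v) {w : W} :
    w ∈ (p.expand P).support ↔
      (∃ x ∈ p.support, w = f x) ∨ ∃ e ∈ p.darts, w ∈ (P _ _ e.adj).support := by
  induction p with
  | nil => simp [expand]
  | cons h p ih =>
    simp only [expand, mem_support_append_iff, ih, support_cons, darts_cons, List.mem_cons,
      exists_eq_or_imp]
    have := start_mem_support (P _ _ h)
    aesop

theorem expand_append {u v w : V} (p : G.Walk u v) (q : G.Walk v w) :
    (p.append q).expand P = (p.expand P).append (q.expand P) := by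
  induction p with
  | nil => rfl
  | cons h p ih => simp only [cons_append, expand, ih, append_assoc]

theorem IsPath.append {u v w : V} {p : G.Walk u v} {q : G.Walk v w} (hp : p.IsPath)
    (hq : q.IsPath) (h : ∀ x ∈ p.support, x ∈ q.support → x = v) : (p.append q).IsPath := by
  rw [isPath_def, support_append]
  refine hp.support_nodup.append hq.support_nodup.tail fun x hx hx' => ?_
  have hnodup := hq.support_nodup
  rw [← q.cons_tail_support, List.nodup_cons] at hnodup
  exact hnodup.1 (h x hx (List.mem_of_mem_tail hx') ▸ hx')

end SimpleGraph.Walk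

namespace IsSubdivPaths

open SimpleGraph

variable {U V W : Type} {T : SimpleGraph U} {G : SimpleGraph V} {H : SimpleGraph W}
  {f : V → W} {P : ∀ u v, G.Adj u v → H.Walk (f u) (f v)}

theorem injective (hP : IsSubdivPaths G H f P) : Function.Injective f := hP.1

theorem isPath (hP : IsSubdivPaths G H f P) {u v : V} (h : G.Adj u v) : (P u v h).IsPath :=
  hP.2.1 u v h

theorem symm_eq (hP : IsSubdivPaths G H f P) {u v : V} (h : G.Adj u v) :
    P v u h.symm = (P u v h).reverse :=
  hP.2.2.1 u v h

theorem eq_or_eq_of_mem_support (hP : IsSubdivPaths G H f P) {u v : V} (h : G.Adj u v)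
    {w : W} (hw : w ∈ (P u v h).support) (hwf : w ∈ Set.range f) : w = f u ∨ w = f v := by
  by_contra! hne
  exact hP.2.2.2.1 u v h w hw hne.1 hne.2 hwf

theorem mem_range_of_mem_support (hP : IsSubdivPaths G H f P) {u v u' v' : V}
    (h : G.Adj u v) (h' : G.Adj u' v') (hne : s(u, v) ≠ s(u', v')) {w : W}
    (hw : w ∈ (P u v h).support) (hw' : w ∈ (P u' v' h').support) : w ∈ Set.range f :=
  hP.2.2.2.2 u v h u' v' h' hne w hw hw'

theorem notMem_edges_of_ne (hP : IsSubdivPaths G H f P) {u v u' v' : V} (h : G.Adj u v)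
    (h' : G.Adj u' v') (hne : s(u, v) ≠ s(u', v')) {e : Sym2 W} (he : e ∈ (P u v h).edges)
    (he' : e ∈ (P u' v' h').edges) : False := by
  induction e using Sym2.ind with | _ a b => ?_
  have hmem (c : W) (hc : c = a ∨ c = b) : c ∈ s(f u, f v) ∧ c ∈ s(f u', f v') := by
    have hsupp {x y : V} (hxy : G.Adj x y) (he : s(a, b) ∈ (P x y hxy).edges) :
        c ∈ (P x y hxy).support := by
      rcases hc with rfl | rfl
      exacts [Walk.fst_mem_support_of_mem_edges _ he, Walk.snd_mem_support_of_mem_edges _ he]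
    have hf := hP.mem_range_of_mem_support h h' hne (hsupp h he) (hsupp h' he')
    exact ⟨Sym2.mem_iff.2 (hP.eq_or_eq_of_mem_support h (hsupp h he) hf),
      Sym2.mem_iff.2 (hP.eq_or_eq_of_mem_support h' (hsupp h' he') hf)⟩
  have hab := ((P u v h).adj_of_mem_edges he).ne
  exact hne (Sym2.map.injective hP.injective (Sym2.eq_of_ne_mem hab (hmem a (.inl rfl)).1
    (hmem b (.inr rfl)).1 (hmem a (.inl rfl)).2 (hmem b (.inr rfl)).2))

theorem apply_mem_support_expand_iff (hP : IsSubdivPaths G H f P) {u v x : V}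
    (p : G.Walk u v) : f x ∈ (p.expand P).support ↔ x ∈ p.support := by
  refine ⟨fun hx => ?_, fun hx => p.mem_support_expand.2 (Or.inl ⟨x, hx, rfl⟩)⟩
  rcases p.mem_support_expand.1 hx with ⟨y, hy, hxy⟩ | ⟨e, he, hxe⟩
  · exact hP.injective hxy ▸ hy
  · rcases hP.eq_or_eq_of_mem_support e.adj hxe ⟨x, rfl⟩ with hxe | hxe
    · exact hP.injective hxe ▸ p.dart_fst_mem_support_of_mem_darts he
    · exact hP.injective hxe ▸ p.dart_snd_mem_support_of_mem_darts he

theorem isPath_expand (hP : IsSubdivPaths G H f P) {u v : V} {p : G.Walk u v}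
    (hp : p.IsPath) : (p.expand P).IsPath := by
  induction p with
  | nil => exact Walk.IsPath.nil
  | @cons u x v h p ih =>
    rw [Walk.cons_isPath_iff] at hp
    refine Walk.IsPath.append (hP.isPath h) (ih hp.1) fun w hw hw' => ?_
    have hu : f u ∉ (p.expand P).support := (hP.apply_mem_support_expand_iff p).not.2 hp.2
    have hwf : w ∈ Set.range f := by
      rcases p.mem_support_expand.1 hw' with ⟨y, -, rfl⟩ | ⟨e, he, hwe⟩
      · exact ⟨y, rfl⟩
      · refine hP.mem_range_of_mem_support h e.adj (fun hue => hp.2 ?_) hw hwe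
        rcases Sym2.eq_iff.1 hue with ⟨rfl, -⟩ | ⟨rfl, -⟩
        · exact p.dart_fst_mem_support_of_mem_darts he
        · exact p.dart_snd_mem_support_of_mem_darts he
    rcases hP.eq_or_eq_of_mem_support h hw hwf with rfl | rfl
    · exact absurd hw' hu
    · rfl

theorem expand_reverse (hP : IsSubdivPaths G H f P) {u v : V} (p : G.Walk u v) :
    p.reverse.expand P = (p.expand P).reverse := by
  induction p with
  | nil => rfl
  | cons h p ih =>
    simp only [Walk.reverse_cons, Walk.expand_append, ih, Walk.expand, Walk.append_nil,
      Walk.reverse_append, ← hP.symm_eq h]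

theorem trans {φ : U → V} {D : ∀ x y, T.Adj x y → G.Walk (φ x) (φ y)}
    (hD : IsSubdivPaths T G φ D) (hP : IsSubdivPaths G H f P) :
    IsSubdivPaths T H (f ∘ φ) (fun x y h => (D x y h).expand P) := by
  refine ⟨hP.injective.comp hD.injective, fun x y h => hP.isPath_expand (hD.isPath h),
    fun x y h => by dsimp only; rw [hD.symm_eq h, hP.expand_reverse], ?_, ?_⟩
  · rintro x y h w hw hwx hwy ⟨z, rfl⟩
    have hz := (hP.apply_mem_support_expand_iff _).1 hw
    rcases hD.eq_or_eq_of_mem_support h hz ⟨z, rfl⟩ with hzx | hzx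
    · exact hwx (congrArg f hzx)
    · exact hwy (congrArg f hzx)
  · intro x y h x' y' h' hne w hw hw'
    by_cases hwf : w ∈ Set.range f
    · obtain ⟨v, rfl⟩ := hwf
      obtain ⟨z, rfl⟩ := hD.mem_range_of_mem_support h h' hne
        ((hP.apply_mem_support_expand_iff _).1 hw) ((hP.apply_mem_support_expand_iff _).1 hw')
      exact ⟨z, rfl⟩
    rcases (Walk.mem_support_expand _).1 hw with ⟨v, -, rfl⟩ | ⟨e, he, hwe⟩
    · exact absurd ⟨v, rfl⟩ hwf
    rcases (Walk.mem_support_expand _).1 hw' with ⟨v, -, rfl⟩ | ⟨e', he', hwe'⟩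
    · exact absurd ⟨v, rfl⟩ hwf
    have hee : e.edge = e'.edge := by
      by_contra hee
      exact hwf (hP.mem_range_of_mem_support e.adj e'.adj hee hwe hwe')
    refine (hD.notMem_edges_of_ne h h' hne (List.mem_map_of_mem he) ?_).elim
    exact hee ▸ List.mem_map_of_mem he'

end IsSubdivPaths

theorem exists_isSubdivPaths_fromRel {V W : Type} {H : SimpleGraph W} {r : V → V → Prop}
    {g : V → W} (S : V → V → Set W) (hr : ∀ u v, r u v → ¬ r v u)
    (hg : Function.Injective g)
    (hpath : ∀ u v, r u v →
      ∃ p : H.Walk (g u) (g v), p.IsPath ∧ ∀ w ∈ p.support, w ∈ S u v)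
    (hint : ∀ u v, r u v → ∀ w ∈ S u v, w ∈ Set.range g → w = g u ∨ w = g v)
    (hdisj : ∀ u v u' v', r u v → r u' v' → (u, v) ≠ (u', v') →
      ∀ w ∈ S u v, w ∈ S u' v' → w ∈ Set.range g) :
    ∃ P, IsSubdivPaths (SimpleGraph.fromRel r) H g P := by
  choose D hDpath hDS using hpath
  have hback {u v : V} (h : (SimpleGraph.fromRel r).Adj u v) (hc : ¬ r u v) : r v u :=
    ((SimpleGraph.fromRel_adj _ _ _).1 h).2.resolve_left hc
  let P u v (h : (SimpleGraph.fromRel r).Adj u v) : H.Walk (g u) (g v) :=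
    if hc : r u v then D u v hc else (D v u (hback h hc)).reverse
  have horient {u v : V} (h : (SimpleGraph.fromRel r).Adj u v) :
      ∃ x y, ∃ _ : r x y, s(x, y) = s(u, v) ∧ ∀ w ∈ (P u v h).support, w ∈ S x y := by
    by_cases hc : r u v
    · exact ⟨u, v, hc, rfl, by simpa [P, hc] using hDS u v hc⟩
    · refine ⟨v, u, hback h hc, Sym2.eq_swap, ?_⟩
      simpa [P, hc] using hDS v u (hback h hc)
  refine ⟨P, hg, fun u v h => ?_, fun u v h => ?_, ?_, ?_⟩
  · by_cases hc : r u v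
    · simpa [P, hc] using hDpath u v hc
    · simpa [P, hc] using (hDpath v u (hback h hc)).reverse
  · by_cases hc : r u v
    · simp [P, hc, hr u v hc]
    · simp [P, hc, hback h hc]
  · rintro u v h w hw hwu hwv hwg
    obtain ⟨x, y, hxy, hs, hS⟩ := horient h
    have hend (z : V) (hz : z ∈ s(x, y)) : g z ≠ w := by
      rcases Sym2.mem_iff.1 (hs ▸ hz) with rfl | rfl
      exacts [hwu.symm, hwv.symm]
    rcases hint x y hxy w (hS w hw) hwg with rfl | rfl
    exacts [hend x (Sym2.mem_mk_left x y) rfl, hend y (Sym2.mem_mk_right x y) rfl]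
  · intro u v h u' v' h' hne w hw hw'
    obtain ⟨x, y, hxy, hs, hS⟩ := horient h
    obtain ⟨x', y', hxy', hs', hS'⟩ := horient h'
    refine hdisj x y x' y' hxy hxy' (fun e => hne ?_) w (hS w hw) (hS' w hw')
    obtain ⟨rfl, rfl⟩ := Prod.mk.inj e
    exact hs.symm.trans hs'

namespace binaryTree

theorem adj_cons {d : ℕ} (b : Bool) {l : List Bool} (hl : l.length < d)
    (hbl : (b :: l).length < d) : (binaryTree d).Adj ⟨l, hl⟩ ⟨b :: l, hbl⟩ := by
  rw [binaryTree, SimpleGraph.fromRel_adj]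
  refine ⟨fun h => ?_, .inl ⟨b, rfl⟩⟩
  simpa using congrArg (fun x => x.1.length) h

theorem exists_isPath_of_suffix {d : ℕ} {l l' : List Bool} (h : l <:+ l')
    (hl : l'.length < d) :
    ∃ p : (binaryTree d).Walk ⟨l, h.length_le.trans_lt hl⟩ ⟨l', hl⟩,
      p.IsPath ∧ ∀ w ∈ p.support, l <:+ w.1 ∧ w.1 <:+ l' := by
  obtain ⟨m, rfl⟩ := h
  induction m with
  | nil => exact ⟨.nil, .nil, by simp⟩
  | cons c m ih =>
    have hml : (m ++ l).length < d := by simp at hl ⊢; omega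
    obtain ⟨p, hp, hsupp⟩ := ih hml
    refine ⟨p.concat (adj_cons c hml hl), hp.concat (fun hv => ?_) _, fun w hw => ?_⟩
    · simpa using (hsupp _ hv).2.length_le
    · rw [SimpleGraph.Walk.support_concat, List.mem_append, List.mem_singleton] at hw
      rcases hw with hw | rfl
      · exact ⟨(hsupp w hw).1, (hsupp w hw).2.trans (List.suffix_cons c _)⟩
      · exact ⟨List.suffix_append _ _, List.suffix_refl _⟩

end binaryTree

namespace List

variable {α : Type*}

theorem prefix_or_prefix_or_exists_append_singleton_prefix :
    ∀ x y : List α, x <+: y ∨ y <+: x ∨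
      ∃ z b c, b ≠ c ∧ z ++ [b] <+: x ∧ z ++ [c] <+: y
  | [], _ => .inl (nil_prefix)
  | _ :: _, [] => .inr (.inl nil_prefix)
  | b :: x, c :: y => by
    by_cases hbc : b = c
    · subst hbc
      rcases prefix_or_prefix_or_exists_append_singleton_prefix x y with
        h | h | ⟨z, b', c', hne, hx, hy⟩
      · exact .inl ((prefix_cons_inj b).2 h)
      · exact .inr (.inl ((prefix_cons_inj b).2 h))
      · exact .inr (.inr ⟨b :: z, b', c', hne, (prefix_cons_inj b).2 hx,
          (prefix_cons_inj b).2 hy⟩)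
    · exact .inr (.inr ⟨[], b, c, hbc, by simp, by simp⟩)

theorem suffix_or_suffix_or_exists_cons_suffix (x y : List α) :
    x <:+ y ∨ y <:+ x ∨ ∃ z b c, b ≠ c ∧ b :: z <:+ x ∧ c :: z <:+ y := by
  rcases prefix_or_prefix_or_exists_append_singleton_prefix x.reverse y.reverse with
    h | h | ⟨z, b, c, hne, hx, hy⟩
  · exact .inl (reverse_prefix.1 h)
  · exact .inr (.inl (reverse_prefix.1 h))
  · refine .inr (.inr ⟨z.reverse, b, c, hne, reverse_prefix.1 ?_, reverse_prefix.1 ?_⟩) <;>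
      simpa using ‹_›

theorem exists_cons_suffix_of_suffix_of_ne {x y : List α} (h : x <:+ y) (hne : x ≠ y) :
    ∃ b, b :: x <:+ y := by
  obtain ⟨m, rfl⟩ := h
  rcases eq_nil_or_concat m with rfl | ⟨m, b, rfl⟩
  · exact absurd rfl hne
  · exact ⟨b, m, by simp⟩

end List

/-- A subdivision of `binaryTree a` inside `binaryTree d`, on vertex strings: `x <:+ y` says
that `y` lies in the subtree below `x`, and the image of the `b`-child of `x` lies below the
`b`-child of the image of `x`. The connecting paths are the descending paths of the tree. -/
structure IsBranchEmbedding (a d : ℕ) (φ : List Bool → List Bool) : Prop where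
  length_lt : ∀ x : List Bool, x.length < a → (φ x).length < d
  cons_suffix : ∀ (b : Bool) (x : List Bool), (b :: x).length < a → b :: φ x <:+ φ (b :: x)

namespace IsBranchEmbedding

variable {a d : ℕ} {φ : List Bool → List Bool}

theorem mono {a' : ℕ} (hφ : IsBranchEmbedding a d φ) (h : a' ≤ a) :
    IsBranchEmbedding a' d φ :=
  ⟨fun x hx => hφ.length_lt x (hx.trans_le h),
    fun b x hx => hφ.cons_suffix b x (hx.trans_le h)⟩

theorem suffix_of_suffix (hφ : IsBranchEmbedding a d φ) {x y : List Bool} (hxy : x <:+ y)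
    (hy : y.length < a) : φ x <:+ φ y := by
  obtain ⟨m, rfl⟩ := hxy
  induction m with
  | nil => exact List.suffix_refl _
  | cons b m ih =>
    have hm : (m ++ x).length < a := by simp at hy ⊢; omega
    exact (ih hm).trans ((List.suffix_cons b _).trans (hφ.cons_suffix b _ hy))

theorem cons_suffix_of_cons_suffix (hφ : IsBranchEmbedding a d φ) {b : Bool}
    {x y : List Bool} (h : b :: x <:+ y) (hy : y.length < a) : b :: φ x <:+ φ y :=
  (hφ.cons_suffix b x (h.length_le.trans_lt hy)).trans (hφ.suffix_of_suffix h hy)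

theorem length_lt_of_suffix_of_ne (hφ : IsBranchEmbedding a d φ) {x y : List Bool}
    (hxy : x <:+ y) (hne : x ≠ y) (hy : y.length < a) : (φ x).length < (φ y).length := by
  obtain ⟨b, hb⟩ := List.exists_cons_suffix_of_suffix_of_ne hxy hne
  simpa using (hφ.cons_suffix_of_cons_suffix hb hy).length_le

theorem not_suffix_of_cons_suffix (hφ : IsBranchEmbedding a d φ) {z x y : List Bool}
    {b c : Bool} (hbc : b ≠ c) (hx : b :: z <:+ x) (hy : c :: z <:+ y) (hxa : x.length < a)
    (hya : y.length < a) : ¬ φ x <:+ φ y := by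
  intro hxy
  have hb := (hφ.cons_suffix_of_cons_suffix hx hxa).trans hxy
  have hc := hφ.cons_suffix_of_cons_suffix hy hya
  have := (List.suffix_of_suffix_length_le hb hc (by simp)).eq_of_length (by simp)
  exact hbc (List.cons.inj this).1

theorem suffix_iff (hφ : IsBranchEmbedding a d φ) {x y : List Bool} (hx : x.length < a)
    (hy : y.length < a) : φ x <:+ φ y ↔ x <:+ y := by
  refine ⟨fun h => ?_, fun h => hφ.suffix_of_suffix h hy⟩
  rcases List.suffix_or_suffix_or_exists_cons_suffix x y with
    hxy | hyx | ⟨z, b, c, hbc, hbx, hcy⟩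
  · exact hxy
  · by_cases hne : y = x
    · exact hne ▸ List.suffix_refl y
    · exact absurd h.length_le (hφ.length_lt_of_suffix_of_ne hyx hne hx).not_ge
  · exact absurd h (hφ.not_suffix_of_cons_suffix hbc hbx hcy hx hy)

theorem eq_of_apply_eq (hφ : IsBranchEmbedding a d φ) {x y : List Bool} (hx : x.length < a)
    (hy : y.length < a) (h : φ x = φ y) : x = y :=
  antisymm ((hφ.suffix_iff hx hy).1 (h ▸ List.suffix_refl _))
    ((hφ.suffix_iff hy hx).1 (h ▸ List.suffix_refl _))

theorem eq_or_eq_of_mem_edge_images (hφ : IsBranchEmbedding a d φ) {x x' : List Bool}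
    {b b' : Bool} (hbx : (b :: x).length < a) (hbx' : (b' :: x').length < a)
    (hxx' : x <:+ x') (hne : (x, b) ≠ (x', b')) {w : List Bool} (hw : φ x' <:+ w)
    (hwb : w <:+ φ (b :: x)) (hwb' : w <:+ φ (b' :: x')) : w = φ x' ∨ w = φ (b :: x) := by
  have hx' : x'.length < a := by simp at hbx'; omega
  rcases List.suffix_cons_iff.1 ((hφ.suffix_iff hx' hbx).1 (hw.trans hwb)) with rfl | hx'x
  · exact .inr (antisymm hwb hw)
  obtain rfl : x = x' := antisymm hxx' hx'x
  refine .inl (by_contra fun hw' => hne ?_)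
  have hlt : (b :: φ x).length ≤ w.length :=
    lt_of_le_of_ne hw.length_le fun h => hw' (hw.eq_of_length h).symm
  have hb := List.suffix_of_suffix_length_le (hφ.cons_suffix b x hbx) hwb hlt
  have hb' := List.suffix_of_suffix_length_le (hφ.cons_suffix b' x hbx') hwb' hlt
  rw [(List.cons.inj ((List.suffix_of_suffix_length_le hb hb' (by simp)).eq_of_length
    (by simp))).1]

def vertexMap (hφ : IsBranchEmbedding a d φ) (x : {l : List Bool // l.length < a}) :
    {l : List Bool // l.length < d} :=
  ⟨φ x.1, hφ.length_lt x.1 x.2⟩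

theorem exists_isSubdivPaths (hφ : IsBranchEmbedding a d φ) :
    ∃ P, IsSubdivPaths (binaryTree a) (binaryTree d) hφ.vertexMap P := by
  let S (x y : {l : List Bool // l.length < a}) : Set {l : List Bool // l.length < d} :=
    {w | φ x.1 <:+ w.1 ∧ w.1 <:+ φ y.1}
  have hdisj (u v u' v' : {l : List Bool // l.length < a}) (b b' : Bool) (hb : v.1 = b :: u.1)
      (hb' : v'.1 = b' :: u'.1) (hne : (u, v) ≠ (u', v')) (huu' : φ u.1 <:+ φ u'.1)
      (w) (hw : w ∈ S u v) (hw' : w ∈ S u' v') : w ∈ Set.range hφ.vertexMap := by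
    have hne' : (u.1, b) ≠ (u'.1, b') := by
      intro h
      obtain ⟨h1, rfl⟩ := Prod.mk.inj h
      exact hne (by rw [Subtype.ext h1, Subtype.ext (hb.trans (h1 ▸ hb'.symm))])
    rcases hφ.eq_or_eq_of_mem_edge_images (hb ▸ v.2) (hb' ▸ v'.2)
      ((hφ.suffix_iff u.2 u'.2).1 huu') hne' hw'.1 (hb ▸ hw.2) (hb' ▸ hw'.2) with h | h
    · exact ⟨u', Subtype.ext h.symm⟩
    · exact ⟨v, Subtype.ext (by simp [vertexMap, hb, h])⟩
  refine exists_isSubdivPaths_fromRel S ?_ ?_ ?_ ?_ ?_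
  · rintro u v ⟨b, hb⟩ ⟨c, hc⟩
    have := congrArg List.length hc
    simp only [hb, List.length_cons] at this
    omega
  · exact fun x y h => Subtype.ext (hφ.eq_of_apply_eq x.2 y.2 (congrArg Subtype.val h))
  · rintro u ⟨v, hv⟩ ⟨b, rfl⟩
    exact binaryTree.exists_isPath_of_suffix (hφ.suffix_of_suffix (List.suffix_cons b _) hv)
      (hφ.length_lt _ hv)
  · rintro u v ⟨b, hb⟩ w ⟨hw1, hw2⟩ ⟨z, rfl⟩
    rw [hb] at hw2
    rcases List.suffix_cons_iff.1 ((hφ.suffix_iff z.2 (hb ▸ v.2)).1 hw2) with h | h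
    · exact .inr (Subtype.ext (by simp [vertexMap, h, hb]))
    · exact .inl (Subtype.ext (by simp [vertexMap, antisymm h ((hφ.suffix_iff u.2 z.2).1 hw1)]))
  · rintro u v u' v' ⟨b, hb⟩ ⟨b', hb'⟩ hne w hw hw'
    rcases List.suffix_or_suffix_of_suffix hw.1 hw'.1 with h | h
    · exact hdisj u v u' v' b b' hb hb' hne h w hw hw'
    · exact hdisj u' v' u v b' b hb' hb (Ne.symm hne) h w hw' hw

end IsBranchEmbedding

/-- Sends the root to `l` and the vertex `x ++ [b]`, which is `x` in the subtree below the
child `[b]` of the root, to `ψ b x`. -/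
def graft (l : List Bool) (ψ : Bool → List Bool → List Bool) (x : List Bool) : List Bool :=
  if h : x = [] then l else ψ (x.getLast h) x.dropLast

@[simp]
theorem graft_nil (l : List Bool) (ψ : Bool → List Bool → List Bool) : graft l ψ [] = l :=
  dif_pos rfl

@[simp]
theorem graft_concat (l : List Bool) (ψ : Bool → List Bool → List Bool) (x : List Bool)
    (b : Bool) : graft l ψ (x ++ [b]) = ψ b x := by
  simp [graft]

theorem IsBranchEmbedding.graft {a d : ℕ} {l : List Bool} {ψ : Bool → List Bool → List Bool}
    (hψ : ∀ b, IsBranchEmbedding a d (ψ b)) (hroot : ∀ b, b :: l <:+ ψ b [])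
    (hl : l.length < d) : IsBranchEmbedding (a + 1) d (graft l ψ) := by
  constructor
  · intro x hx
    rcases List.eq_nil_or_concat x with rfl | ⟨x, b, rfl⟩
    · simpa using hl
    · simp only [List.concat_eq_append, graft_concat]
      exact (hψ b).length_lt x (by simpa using hx)
  · intro c x hx
    rcases List.eq_nil_or_concat x with rfl | ⟨x, b, rfl⟩
    · exact (graft_concat l ψ [] c).symm ▸ hroot c
    · simp only [List.concat_eq_append, ← List.cons_append, graft_concat]
      exact (hψ b).cons_suffix c x (by simpa using hx)

variable {κ : Type} {d : ℕ}

def HasColoredBranchEmbedding (c : {l : List Bool // l.length < d} → κ) (l : List Bool)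
    (i : κ) (a : ℕ) : Prop :=
  ∃ φ, IsBranchEmbedding a d φ ∧ l <:+ φ [] ∧
    ∀ x (hx : (φ x).length < d), x.length < a → c ⟨φ x, hx⟩ = i

namespace HasColoredBranchEmbedding

variable {c : {l : List Bool // l.length < d} → κ} {l : List Bool} {i : κ} {a : ℕ}

theorem zero : HasColoredBranchEmbedding c l i 0 :=
  ⟨fun _ => l, ⟨fun _ h => absurd h (Nat.not_lt_zero _), fun _ _ h => absurd h (by simp)⟩,
    List.suffix_refl l, fun _ _ h => absurd h (Nat.not_lt_zero _)⟩

theorem mono {a' : ℕ} (h : HasColoredBranchEmbedding c l i a) (ha : a' ≤ a) :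
    HasColoredBranchEmbedding c l i a' :=
  let ⟨φ, hφ, hroot, hcol⟩ := h
  ⟨φ, hφ.mono ha, hroot, fun x hx hxa => hcol x hx (hxa.trans_le ha)⟩

theorem of_cons {b : Bool} (h : HasColoredBranchEmbedding c (b :: l) i a) :
    HasColoredBranchEmbedding c l i a :=
  let ⟨φ, hφ, hroot, hcol⟩ := h
  ⟨φ, hφ, (List.suffix_cons b l).trans hroot, hcol⟩

theorem graft (h : ∀ b, HasColoredBranchEmbedding c (b :: l) i a) (hl : l.length < d)
    (hcl : c ⟨l, hl⟩ = i) : HasColoredBranchEmbedding c l i (a + 1) := by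
  choose ψ hψ hroot hcol using h
  refine ⟨_root_.graft l ψ, IsBranchEmbedding.graft hψ hroot hl, by simp, fun x hx hxa => ?_⟩
  rcases List.eq_nil_or_concat x with rfl | ⟨x, b, rfl⟩
  · simpa using hcl
  · simp only [List.concat_eq_append, graft_concat] at hx ⊢
    exact hcol b x hx (by simpa using hxa)

end HasColoredBranchEmbedding

theorem exists_hasColoredBranchEmbedding [Fintype κ] (c : {l : List Bool // l.length < d} → κ)
    (n : ℕ) (l : List Bool) (hl : l.length + n = d) :
    ∃ a : κ → ℕ, ∑ i, a i = n ∧ ∀ i, HasColoredBranchEmbedding c l i (a i) := by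
  induction n generalizing l with
  | zero => exact ⟨0, by simp, fun _ => .zero⟩
  | succ n ih =>
    choose a hsum ha using fun b : Bool => ih (b :: l) (by simp; omega)
    have hl' : l.length < d := by omega
    set i₀ := c ⟨l, hl'⟩
    obtain ⟨b₀, hb₀⟩ : ∃ b₀, ∀ b, a b₀ i₀ ≤ a b i₀ := by
      rcases le_total (a false i₀) (a true i₀) with h | h
      · exact ⟨false, fun b => by cases b <;> simp [h]⟩
      · exact ⟨true, fun b => by cases b <;> simp [h]⟩
    refine ⟨a b₀ + Pi.single i₀ 1, by simp [Finset.sum_add_distrib, hsum], fun i => ?_⟩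
    by_cases hi : i = i₀
    · subst hi
      simpa using HasColoredBranchEmbedding.graft (fun b => (ha b i₀).mono (hb₀ b)) hl' rfl
    · simpa [hi] using (ha b₀ i).of_cons

theorem stmt6 {W : Type} (d k : ℕ) (Bstar : SimpleGraph W)
    (hsub : Subdivides (binaryTree d) Bstar) (C : W → Fin k) :
    ∃ a : Fin k → ℕ, (∑ i, a i) = d ∧
      ∀ i : Fin k, ∃ (f : {l : List Bool // l.length < a i} → W)
        (P : ∀ u v, (binaryTree (a i)).Adj u v → Bstar.Walk (f u) (f v)),
        IsSubdivPaths (binaryTree (a i)) Bstar f P ∧ ∀ x, C (f x) = i := by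
  obtain ⟨f, P, hP, -⟩ := hsub
  obtain ⟨a, hsum, ha⟩ := exists_hasColoredBranchEmbedding (C ∘ f) d [] (by simp)
  refine ⟨a, hsum, fun i => ?_⟩
  obtain ⟨φ, hφ, -, hcol⟩ := ha i
  obtain ⟨D, hD⟩ := hφ.exists_isSubdivPaths
  exact ⟨_, _, hD.trans hP, fun x => hcol x.1 _ x.2⟩
end
end

section
/- For every k ≥ 1, every k-UM-critical tree has exactly 2^{k−1} vertices. -/
open scoped Classical

noncomputable section

/-!
Colorings are studied on vertex sets `S` of the fixed tree, through the number `umOn T S` of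
colors needed by the paths inside `S`. The key obstruction: if two disjoint sets each need `m`
colors and are joined inside `S`, then `S` needs `m + 1`, since each contains a vertex of the top
color `m - 1` and the path between two such vertices has no unique maximum. Consequently, for
`j ≥ 2`, a `j`-critical set is the disjoint union of two `(j - 1)`-critical sets joined by an edge,
hence has `2^(j-1)` vertices: the heavy sides of a suitable edge contain two `(j - 1)`-critical
sets, and criticality leaves no room for further vertices. The induction also carries an exchange
property (a vertex attached to a critical set can replace one of its vertices without lowering
`umOn`), which rules out a longer connection between the two halves.
-/

open Set Function

def HasUniqueMax {α : Type*} (C : α → ℕ) (l : List α) : Prop :=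
  ∃! v, v ∈ l ∧ ∀ x ∈ l, C x ≤ C v

section HasUniqueMax

variable {α β : Type*} {C C' : α → ℕ} {l : List α}

theorem HasUniqueMax.congr (h : ∀ x ∈ l, C x = C' x) (hC : HasUniqueMax C l) :
    HasUniqueMax C' l := by
  refine (existsUnique_congr fun v => ?_).1 hC
  exact and_congr_right fun hv => forall₂_congr fun x hx => by rw [h x hx, h v hv]

theorem hasUniqueMax_map {f : β → α} (hf : Injective f) {l : List β} :
    HasUniqueMax C (l.map f) ↔ HasUniqueMax (C ∘ f) l := by
  constructor
  · rintro ⟨_, ⟨hfv, hmax⟩, huniq⟩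
    obtain ⟨v, hv, rfl⟩ := List.mem_map.1 hfv
    refine ⟨v, ⟨hv, fun x hx => hmax _ (List.mem_map_of_mem hx)⟩, fun y ⟨hy, hymax⟩ => hf ?_⟩
    refine huniq _ ⟨List.mem_map_of_mem hy, ?_⟩
    simpa using hymax
  · rintro ⟨v, ⟨hv, hmax⟩, huniq⟩
    refine ⟨f v, ⟨List.mem_map_of_mem hv, by simpa using hmax⟩, ?_⟩
    rintro _ ⟨hfy, hymax⟩
    obtain ⟨y, hy, rfl⟩ := List.mem_map.1 hfy
    exact congrArg f (huniq y ⟨hy, fun x hx => hymax _ (List.mem_map_of_mem hx)⟩)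

theorem hasUniqueMax_of_injective (hC : Injective C) (hl : l ≠ []) : HasUniqueMax C l := by
  obtain ⟨v, hv, hmax⟩ := l.toFinset.exists_max_image C (by simpa using hl)
  refine ⟨v, ⟨List.mem_toFinset.1 hv, fun x hx => hmax x (List.mem_toFinset.2 hx)⟩, ?_⟩
  rintro y ⟨hy, hymax⟩
  exact hC ((hmax y (List.mem_toFinset.2 hy)).antisymm (hymax v (List.mem_toFinset.1 hv)))

end HasUniqueMax

namespace SimpleGraph

section

variable {V : Type*} (T : SimpleGraph V)

def IsUMColoringOn (S : Set V) (C : V → ℕ) : Prop :=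
  ∀ ⦃u w : V⦄ (p : T.Walk u w), p.IsPath → (∀ x ∈ p.support, x ∈ S) → HasUniqueMax C p.support

def UMColorableOn (S : Set V) (k : ℕ) : Prop :=
  ∃ C : V → ℕ, (∀ v ∈ S, C v < k) ∧ T.IsUMColoringOn S C

/-- The unique-maximum chromatic number of the paths of `T` that stay inside `S`, i.e. of the
path hypergraph of the induced subgraph `T[S]`. -/
def umOn (S : Set V) : ℕ := sInf {k | T.UMColorableOn S k}

def ReachIn (S : Set V) (u w : V) : Prop :=
  ∃ p : T.Walk u w, ∀ x ∈ p.support, x ∈ S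

def compIn (S : Set V) (u : V) : Set V := {w | T.ReachIn S u w}

def IsUMCriticalOn (S : Set V) (j : ℕ) : Prop :=
  T.umOn S = j ∧ ∀ S' ⊂ S, T.umOn S' < j

def IsUMExchange (S : Set V) (j : ℕ) (x ℓ : V) : Prop :=
  j ≤ T.umOn (insert x (S \ {ℓ})) ∧ ∀ c ∈ S \ {ℓ}, T.ReachIn (insert x (S \ {ℓ})) x c

def IsUMExchangeable (S : Set V) (j : ℕ) : Prop :=
  ∀ t ∈ S, ∀ x ∉ S, T.Adj x t → ∃ ℓ ∈ S, T.IsUMExchange S j x ℓ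

variable {T} {S S' A B : Set V} {C : V → ℕ} {j k m : ℕ} {u v w x : V}

theorem IsUMColoringOn.mono (hC : T.IsUMColoringOn S' C) (h : S ⊆ S') : T.IsUMColoringOn S C :=
  fun _ _ p hp hS => hC p hp fun x hx => h (hS x hx)

theorem UMColorableOn.mono (hC : T.UMColorableOn S k) (hk : k ≤ m) : T.UMColorableOn S m :=
  let ⟨C, hb, hC⟩ := hC
  ⟨C, fun v hv => (hb v hv).trans_le hk, hC⟩

theorem umColorableOn_natCard [Finite V] (S : Set V) : T.UMColorableOn S (Nat.card V) :=
  ⟨fun v => Finite.equivFin V v, fun v _ => (Finite.equivFin V v).is_lt,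
    fun _ _ p _ _ => hasUniqueMax_of_injective
      (Fin.val_injective.comp (Finite.equivFin V).injective) p.support_ne_nil⟩

theorem umColorableOn_umOn [Finite V] (S : Set V) : T.UMColorableOn S (T.umOn S) :=
  Nat.sInf_mem (s := {k | T.UMColorableOn S k}) ⟨_, umColorableOn_natCard S⟩

theorem umOn_le_iff [Finite V] : T.umOn S ≤ k ↔ T.UMColorableOn S k :=
  ⟨fun h => (umColorableOn_umOn S).mono h, fun h => Nat.sInf_le h⟩

theorem umOn_pos [Finite V] (h : S.Nonempty) : 0 < T.umOn S := by
  obtain ⟨v, hv⟩ := h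
  obtain ⟨C, hb, -⟩ := umColorableOn_umOn (T := T) S
  exact (Nat.zero_le _).trans_lt (hb v hv)

namespace ReachIn

theorem refl (h : u ∈ S) : T.ReachIn S u u := ⟨.nil, by simpa using h⟩

theorem symm (h : T.ReachIn S u w) : T.ReachIn S w u :=
  let ⟨p, hp⟩ := h
  ⟨p.reverse, fun x hx => hp x (by simpa using hx)⟩

theorem trans (h : T.ReachIn S u v) (h' : T.ReachIn S v w) : T.ReachIn S u w := by
  obtain ⟨p, hp⟩ := h
  obtain ⟨q, hq⟩ := h'
  refine ⟨p.append q, fun x hx => ?_⟩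
  rcases (Walk.mem_support_append_iff p q).1 hx with hx | hx
  exacts [hp x hx, hq x hx]

theorem mono (h : T.ReachIn S u w) (hS : S ⊆ S') : T.ReachIn S' u w :=
  let ⟨p, hp⟩ := h
  ⟨p, fun x hx => hS (hp x hx)⟩

theorem mem_right (h : T.ReachIn S u w) : w ∈ S :=
  let ⟨p, hp⟩ := h
  hp w p.end_mem_support

theorem of_adj (h : T.Adj u w) (hu : u ∈ S) (hw : w ∈ S) : T.ReachIn S u w :=
  ⟨.cons h .nil, by simp [hu, hw]⟩

theorem of_mem_insert {D : Set V} {c : V} (h : ∀ c ∈ D, T.ReachIn (insert x D) x c)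
    (hc : c ∈ insert x D) : T.ReachIn (insert x D) x c := by
  rcases hc with rfl | hc
  exacts [refl (mem_insert _ _), h c hc]

end ReachIn

theorem compIn_subset : T.compIn S u ⊆ S := fun _ h => h.mem_right

theorem mem_compIn_self (h : u ∈ S) : u ∈ T.compIn S u := ReachIn.refl h

theorem compIn_eq_of_mem (h : w ∈ T.compIn S u) : T.compIn S w = T.compIn S u :=
  ext fun _ => ⟨fun hx => ReachIn.trans h hx, fun hx => ReachIn.trans (ReachIn.symm h) hx⟩

theorem Walk.support_subset_compIn {p : T.Walk u w} (hp : ∀ x ∈ p.support, x ∈ S) :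
    ∀ x ∈ p.support, x ∈ T.compIn S u :=
  fun x hx => ⟨p.takeUntil x hx, fun y hy => hp y (p.support_takeUntil_subset_support hx hy)⟩

theorem Walk.exists_adj_mem_of_notMem (p : T.Walk u w) (hu : u ∉ B) (hw : w ∈ B) :
    ∃ x t, T.Adj x t ∧ t ∈ B ∧ ∃ q : T.Walk u x, ∀ y ∈ q.support, y ∈ p.support ∧ y ∉ B := by
  induction p with
  | nil => exact absurd hw hu
  | @cons u u' w h p ih =>
    by_cases hu' : u' ∈ B
    · exact ⟨u, u', h, hu', .nil, by simp [hu]⟩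
    · obtain ⟨x, t, hxt, ht, q, hq⟩ := ih hu' hw
      refine ⟨x, t, hxt, ht, .cons h q, fun y hy => ?_⟩
      rcases List.mem_cons.1 (Walk.support_cons h q ▸ hy) with rfl | hy
      · exact ⟨p.support.mem_cons_self .., hu⟩
      · exact ⟨List.mem_cons_of_mem _ (hq y hy).1, (hq y hy).2⟩

theorem umOn_le_of_forall_compIn [Finite V] (h : ∀ u ∈ S, T.umOn (T.compIn S u) ≤ m) :
    T.umOn S ≤ m := by
  choose C hb hC using fun X : Set V => umColorableOn_umOn (T := T) X
  refine umOn_le_iff.2 ⟨fun v => C (T.compIn S v) v,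
    fun v hv => (hb _ v (mem_compIn_self hv)).trans_le (h v hv), fun u w p hp hS => ?_⟩
  have hcomp := Walk.support_subset_compIn hS
  refine (hC _ p hp hcomp).congr fun x hx => ?_
  rw [compIn_eq_of_mem (hcomp x hx)]

/-- Giving `v` a new top color on top of an optimal coloring of `S \ {v}`. -/
theorem umOn_le_umOn_sdiff_singleton_add_one [Finite V] (S : Set V) (v : V) :
    T.umOn S ≤ T.umOn (S \ {v}) + 1 := by
  obtain ⟨C, hb, hC⟩ := umColorableOn_umOn (T := T) (S \ {v})
  set m := T.umOn (S \ {v})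
  refine umOn_le_iff.2 ⟨fun w => if w = v then m else C w, fun w hw => ?_, fun a b p hp hS => ?_⟩
  · by_cases h : w = v
    · simp [h]
    · simpa [h] using (hb w ⟨hw, h⟩).trans (Nat.lt_succ_self m)
  by_cases hv : v ∈ p.support
  · refine ⟨v, ⟨hv, fun x hx => ?_⟩, fun y ⟨hy, hymax⟩ => ?_⟩
    · by_cases h : x = v
      · simp [h]
      · simpa [h] using (hb x ⟨hS x hx, h⟩).le
    · by_contra h
      have := hymax v hv
      simp only [if_neg h] at this
      exact (hb y ⟨hS y hy, h⟩).not_ge (by simpa using this)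
  · have hS' : ∀ x ∈ p.support, x ∈ S \ {v} := fun x hx => ⟨hS x hx, by rintro rfl; exact hv hx⟩
    refine (hC p hp hS').congr fun x hx => ?_
    rw [if_neg (show x ≠ v from (hS' x hx).2)]

theorem lt_umOn_of_reachIn [Finite V] (hm : 0 < m) (hA : A ⊆ S) (hB : B ⊆ S)
    (hAB : Disjoint A B) (hmA : m ≤ T.umOn A) (hmB : m ≤ T.umOn B)
    (hreach : ∀ a ∈ A, ∀ b ∈ B, T.ReachIn S a b) : m < T.umOn S := by
  by_contra! hS
  obtain ⟨C, hb, hC⟩ := umOn_le_iff.1 hS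
  have top : ∀ X ⊆ S, m ≤ T.umOn X → ∃ x ∈ X, C x = m - 1 := by
    intro X hX hmX
    by_contra! h
    have : T.umOn X ≤ m - 1 :=
      umOn_le_iff.2 ⟨C, fun x hx => by have := hb x (hX hx); have := h x hx; omega, hC.mono hX⟩
    omega
  obtain ⟨s, hs, hCs⟩ := top A hA hmA
  obtain ⟨t, ht, hCt⟩ := top B hB hmB
  obtain ⟨q, hq⟩ := hreach s hs t ht
  have hq' : ∀ x ∈ q.bypass.support, x ∈ S := fun x hx => hq x (q.support_bypass_subset_support hx)
  have hmax : ∀ y, C y = m - 1 → y ∈ q.bypass.support →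
      y ∈ q.bypass.support ∧ ∀ x ∈ q.bypass.support, C x ≤ C y := fun y hy hyq =>
    ⟨hyq, fun x hx => by have := hb x (hq' x hx); omega⟩
  have hst : s = t := (hC _ q.bypass_isPath hq').unique
    (hmax s hCs q.bypass.start_mem_support) (hmax t hCt q.bypass.end_mem_support)
  exact Set.disjoint_left.1 hAB hs (hst ▸ ht)

theorem umOn_empty [Finite V] : T.umOn ∅ = 0 :=
  Nat.le_zero.1 <| umOn_le_iff.2
    ⟨0, by simp, fun _ _ p _ hp => absurd (hp _ p.start_mem_support) id⟩

namespace IsUMCriticalOn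

theorem nonempty [Finite V] (h : T.IsUMCriticalOn S j) (hj : 0 < j) : S.Nonempty := by
  by_contra! hS
  rw [← h.1, hS, umOn_empty] at hj
  exact hj.false

theorem reachIn [Finite V] (h : T.IsUMCriticalOn S j) (hu : u ∈ S) (hw : w ∈ S) :
    T.ReachIn S u w := by
  by_contra huw
  have hlt : ∀ x ∈ S, T.umOn (T.compIn S x) < j := by
    refine fun x hx => h.2 _ (ssubset_of_subset_of_ne compIn_subset fun hxS => huw ?_)
    rw [← hxS] at hu hw
    exact ReachIn.trans (ReachIn.symm hu) hw
  have hS := umOn_le_of_forall_compIn (m := j - 1) fun x hx => Nat.le_sub_one_of_lt (hlt x hx)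
  have := hlt u hu
  have := h.1
  omega

theorem eq_singleton [Finite V] (h : T.IsUMCriticalOn S 1) : ∃ v, S = {v} := by
  obtain ⟨v, hv⟩ := h.nonempty one_pos
  refine ⟨v, (singleton_subset_iff.2 hv).antisymm' fun w hw => ?_⟩
  by_contra hwv
  have := h.2 {v} (ssubset_of_subset_of_ne (singleton_subset_iff.2 hv) fun h => hwv (h ▸ hw))
  exact (umOn_pos (singleton_nonempty v)).ne' (Nat.lt_one_iff.1 this)

end IsUMCriticalOn

/-- A minimal subset of `K` that needs `m` colors is `m`-critical. -/
theorem exists_isUMCriticalOn_subset [Finite V] {K : Set V} (h : m ≤ T.umOn K) :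
    ∃ A ⊆ K, T.IsUMCriticalOn A m := by
  obtain ⟨A, hAK, hmin⟩ := Set.Finite.exists_le_minimal (s := {X | X ⊆ K ∧ m ≤ T.umOn X})
    (toFinite _) ⟨subset_rfl, h⟩
  have hlt : ∀ S' ⊂ A, T.umOn S' < m := fun S' hS' =>
    not_le.1 fun hm => hmin.not_prop_of_lt hS' ⟨hS'.1.trans hAK, hm⟩
  refine ⟨A, hAK, le_antisymm ?_ hmin.prop.2, hlt⟩
  rcases A.eq_empty_or_nonempty with rfl | ⟨v, hv⟩
  · simp [umOn_empty]
  · have := hlt _ (sdiff_singleton_ssubset.2 hv)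
    have := umOn_le_umOn_sdiff_singleton_add_one (T := T) A v
    omega

/-- Otherwise all components of `S \ {v}` need fewer than `m` colors, and a new top color on `v`
would color `S` with `m` colors. -/
theorem IsUMCriticalOn.exists_adj_heavy [Finite V] (h : T.IsUMCriticalOn S (m + 1)) (hm : 0 < m)
    (hv : v ∈ S) : ∃ u ∈ S, T.Adj v u ∧ m ≤ T.umOn (T.compIn (S \ {v}) u) := by
  by_contra! hlight
  have : T.umOn (S \ {v}) ≤ m - 1 := umOn_le_of_forall_compIn fun u hu => by
    obtain ⟨p, hp⟩ := h.reachIn hu.1 hv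
    obtain ⟨x, t, hxt, ht, q, hq⟩ := p.exists_adj_mem_of_notMem (B := {v}) hu.2 rfl
    have hxv : T.Adj x v := mem_singleton_iff.1 ht ▸ hxt
    have hx : x ∈ T.compIn (S \ {v}) u := ⟨q, fun y hy => ⟨hp y (hq y hy).1, (hq y hy).2⟩⟩
    have := hlight x (compIn_subset hx).1 hxv.symm
    rw [← compIn_eq_of_mem hx]
    omega
  have := umOn_le_umOn_sdiff_singleton_add_one (T := T) S v
  have := h.1
  omega

/-- Choosing an edge `a b` whose `b`-side is heavy and inclusion-minimal, the `a`-side is heavy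
too: otherwise a heavy side hanging off `b` would be a strictly smaller heavy side. -/
theorem IsUMCriticalOn.exists_adj_heavy_sides [Finite V] (h : T.IsUMCriticalOn S (m + 1))
    (hm : 0 < m) : ∃ a ∈ S, ∃ b ∈ S, T.Adj a b ∧
      m ≤ T.umOn (T.compIn (S \ {b}) a) ∧ m ≤ T.umOn (T.compIn (S \ {a}) b) := by
  obtain ⟨v, hv⟩ := h.nonempty (Nat.succ_pos m)
  obtain ⟨u, hu, hvu, hheavy⟩ := h.exists_adj_heavy hm hv
  obtain ⟨⟨a, b⟩, ⟨ha, hb, hab, hbside⟩, hmin⟩ := Set.Finite.exists_minimalFor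
    (fun e : V × V => T.compIn (S \ {e.1}) e.2)
    {e | e.1 ∈ S ∧ e.2 ∈ S ∧ T.Adj e.1 e.2 ∧ m ≤ T.umOn (T.compIn (S \ {e.1}) e.2)}
    (toFinite _) ⟨(v, u), hv, hu, hvu, hheavy⟩
  refine ⟨a, ha, b, hb, hab, ?_, hbside⟩
  by_contra haside
  obtain ⟨c, hc, hbc, hcside⟩ := h.exists_adj_heavy hm hb
  have haC : a ∉ T.compIn (S \ {b}) c := fun hac => haside (compIn_eq_of_mem hac ▸ hcside)
  have hsub : T.compIn (S \ {b}) c ⊆ T.compIn (S \ {a}) b := by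
    rintro w ⟨r, hr⟩
    have hrc := Walk.support_subset_compIn hr
    refine ⟨.cons hbc r, fun y hy => ?_⟩
    rcases List.mem_cons.1 (Walk.support_cons hbc r ▸ hy) with rfl | hy
    · exact ⟨hb, hab.ne'⟩
    · exact ⟨(hr y hy).1, fun hya => haC (hya ▸ hrc y hy)⟩
  have hbC : b ∈ T.compIn (S \ {b}) c :=
    hmin (j := (b, c)) ⟨hb, hc, hbc, hcside⟩ hsub (mem_compIn_self ⟨hb, hab.ne'⟩)
  exact (compIn_subset hbC).2 rfl

theorem IsAcyclic.disjoint_compIn (hT : T.IsAcyclic) {a b : V} (hab : T.Adj a b) :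
    Disjoint (T.compIn (S \ {b}) a) (T.compIn (S \ {a}) b) := by
  refine Set.disjoint_left.2 fun w ⟨p, hp⟩ ⟨q, hq⟩ => ?_
  have hbridge := isBridge_iff_forall_walk_mem_edges.1 (isAcyclic_iff_forall_adj_isBridge.1 hT hab)
    (p.append q.reverse)
  rw [Walk.edges_append, List.mem_append, Walk.edges_reverse, List.mem_reverse] at hbridge
  rcases hbridge with he | he
  · exact (hp b (p.snd_mem_support_of_mem_edges he)).2 rfl
  · exact (hq a (q.fst_mem_support_of_mem_edges he)).2 rfl

theorem IsUMCriticalOn.not_forall_reachIn [Finite V] {y : V} (h : T.IsUMCriticalOn S (m + 1))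
    (hm : 0 < m) (hy : y ∈ S) (hA : A ⊆ S \ {y}) (hB : B ⊆ S \ {y}) (hAB : Disjoint A B)
    (hmA : m ≤ T.umOn A) (hmB : m ≤ T.umOn B) : ¬ ∀ a ∈ A, ∀ b ∈ B, T.ReachIn (S \ {y}) a b :=
  fun hreach => (h.2 _ (sdiff_singleton_ssubset.2 hy)).not_ge
    (lt_umOn_of_reachIn hm hA hB hAB hmA hmB hreach)

/-- The two heavy sides of an edge contain disjoint `m`-critical sets `A` and `B`. The first edge
`x t` by which a walk from `A` enters `B` starts in `A`: otherwise exchanging `x` into `B` would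
give two heavy sets joined inside a proper subset of `S`. The same argument puts every vertex of
`S` into `A ∪ B`. -/
theorem IsUMCriticalOn.exists_split [Finite V] (hT : T.IsAcyclic) (h : T.IsUMCriticalOn S (m + 1))
    (hm : 0 < m) (hexch : ∀ D, T.IsUMCriticalOn D m → T.IsUMExchangeable D m) :
    ∃ A B, S = A ∪ B ∧ Disjoint A B ∧ T.IsUMCriticalOn A m ∧ T.IsUMCriticalOn B m ∧
      ∃ a ∈ A, ∃ b ∈ B, T.Adj a b := by
  obtain ⟨a, ha, b, hb, hab, hA', hB'⟩ := h.exists_adj_heavy_sides hm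
  obtain ⟨A, hAa, hA⟩ := exists_isUMCriticalOn_subset hA'
  obtain ⟨B, hBb, hB⟩ := exists_isUMCriticalOn_subset hB'
  have hAS : A ⊆ S := hAa.trans (compIn_subset.trans sdiff_subset)
  have hBS : B ⊆ S := hBb.trans (compIn_subset.trans sdiff_subset)
  have hAB : Disjoint A B := (hT.disjoint_compIn hab).mono hAa hBb
  obtain ⟨s, hs⟩ := hA.nonempty hm
  obtain ⟨t, ht⟩ := hB.nonempty hm
  obtain ⟨p, hp⟩ := h.reachIn (hAS hs) (hBS ht)
  obtain ⟨x, t', hxt, ht', q, hq⟩ := p.exists_adj_mem_of_notMem (Set.disjoint_left.1 hAB hs) ht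
  have hxS : x ∈ S := hp x (hq x q.end_mem_support).1
  have hxB : x ∉ B := (hq x q.end_mem_support).2
  by_cases hxA : x ∈ A
  · refine ⟨A, B, (union_subset hAS hBS).antisymm' fun y hy => ?_, hAB, hA, hB, x, hxA, t', ht',
      hxt⟩
    by_contra hyAB
    have hAy : A ⊆ S \ {y} := fun z hz => ⟨hAS hz, fun hzy => hyAB (.inl (hzy ▸ hz))⟩
    have hBy : B ⊆ S \ {y} := fun z hz => ⟨hBS hz, fun hzy => hyAB (.inr (hzy ▸ hz))⟩
    refine h.not_forall_reachIn hm hy hAy hBy hAB hA.1.ge hB.1.ge fun a' ha' b' hb' => ?_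
    exact ((hA.reachIn ha' hxA).mono hAy).trans
      ((ReachIn.of_adj hxt (hAy hxA) (hBy ht')).trans ((hB.reachIn ht' hb').mono hBy))
  · exfalso
    obtain ⟨ℓ, hℓ, hheavy, hconn⟩ := hexch B hB t' ht' x hxB hxt
    have hxℓ : x ≠ ℓ := fun hxℓ => hxB (hxℓ ▸ hℓ)
    have hAℓ : A ⊆ S \ {ℓ} := fun z hz =>
      ⟨hAS hz, fun hzℓ => Set.disjoint_left.1 hAB hz (mem_singleton_iff.1 hzℓ ▸ hℓ)⟩
    have hBℓ : insert x (B \ {ℓ}) ⊆ S \ {ℓ} :=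
      insert_subset ⟨hxS, hxℓ⟩ (sdiff_subset_sdiff_left hBS)
    have hqℓ : T.ReachIn (S \ {ℓ}) s x := ⟨q, fun y hy =>
      ⟨hp y (hq y hy).1, fun hyℓ => (hq y hy).2 (mem_singleton_iff.1 hyℓ ▸ hℓ)⟩⟩
    refine h.not_forall_reachIn hm (hBS hℓ) hAℓ hBℓ
      (disjoint_insert_right.2 ⟨hxA, hAB.mono_right sdiff_subset⟩) hA.1.ge hheavy
      fun a' ha' b' hb' => ?_
    exact ((hA.reachIn ha' hs).mono hAℓ).trans
      (hqℓ.trans ((ReachIn.of_mem_insert hconn hb').mono hBℓ))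

theorem IsUMExchange.union [Finite V] {a b ℓ : V} (h : T.IsUMExchange A m x ℓ) (hℓ : ℓ ∈ A)
    (ha : a ∈ A) (haℓ : a ≠ ℓ) (hb : b ∈ B) (hab : T.Adj a b) (hAB : Disjoint A B)
    (hB : T.IsUMCriticalOn B m) (hx : x ∉ B) : T.IsUMExchange (A ∪ B) (m + 1) x ℓ := by
  have hm : 0 < m := hB.1 ▸ umOn_pos ⟨b, hb⟩
  have hPX : insert x (A \ {ℓ}) ⊆ insert x ((A ∪ B) \ {ℓ}) :=
    insert_subset_insert (sdiff_subset_sdiff_left subset_union_left)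
  have hBX : B ⊆ insert x ((A ∪ B) \ {ℓ}) := fun z hz => mem_insert_of_mem _
    ⟨.inr hz, fun h => Set.disjoint_left.1 hAB hℓ (mem_singleton_iff.1 h ▸ hz)⟩
  have hxa := (h.2 a ⟨ha, haℓ⟩).mono hPX
  have hxB : ∀ c ∈ B, T.ReachIn (insert x ((A ∪ B) \ {ℓ})) x c := fun c hc =>
    hxa.trans ((ReachIn.of_adj hab hxa.mem_right (hBX hb)).trans ((hB.reachIn hb hc).mono hBX))
  refine ⟨lt_umOn_of_reachIn hm hPX hBX
    (disjoint_insert_left.2 ⟨hx, hAB.mono_left sdiff_subset⟩) h.1 hB.1.ge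
    fun p hp q hq => ((ReachIn.of_mem_insert h.2 hp).symm.mono hPX).trans (hxB q hq), ?_⟩
  rintro c ⟨hcA | hcB, hcℓ⟩
  · exact (h.2 c ⟨hcA, hcℓ⟩).mono hPX
  · exact hxB c hcB

theorem IsUMExchange.union_trans [Finite V] {a t ℓ : V} (h₁ : T.IsUMExchange A m x a)
    (h₂ : T.IsUMExchange B m a ℓ) (ha : a ∈ A) (hℓ : ℓ ∈ B) (hAB : Disjoint A B)
    (hA : T.IsUMCriticalOn A m) (ht : t ∈ A) (hxt : T.Adj x t) (hx : x ∉ A ∪ B) :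
    T.IsUMExchange (A ∪ B) (m + 1) x ℓ := by
  have hm : 0 < m := hA.1 ▸ umOn_pos ⟨a, ha⟩
  have hA₂ : A ⊆ (A ∪ B) \ {ℓ} := fun z hz =>
    ⟨.inl hz, fun h => Set.disjoint_left.1 hAB hz (mem_singleton_iff.1 h ▸ hℓ)⟩
  have hAX := hA₂.trans (subset_insert x _)
  have hPX : insert x (A \ {a}) ⊆ insert x ((A ∪ B) \ {ℓ}) :=
    insert_subset_insert (sdiff_subset.trans hA₂)
  have hQX : insert a (B \ {ℓ}) ⊆ insert x ((A ∪ B) \ {ℓ}) :=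
    insert_subset (hAX ha) ((sdiff_subset_sdiff_left subset_union_right).trans (subset_insert x _))
  have hPQ : Disjoint (insert x (A \ {a})) (insert a (B \ {ℓ})) := by
    refine Set.disjoint_left.2 ?_
    rintro z (rfl | ⟨hzA, hza⟩) (rfl | ⟨hzB, -⟩)
    · exact hx (.inl ha)
    · exact hx (.inr hzB)
    · exact hza rfl
    · exact Set.disjoint_left.1 hAB hzA hzB
  have hxA : ∀ c ∈ A, T.ReachIn (insert x ((A ∪ B) \ {ℓ})) x c := fun c hc =>
    (ReachIn.of_adj hxt (mem_insert _ _) (hAX ht)).trans ((hA.reachIn ht hc).mono hAX)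
  have hxQ : ∀ c ∈ insert a (B \ {ℓ}), T.ReachIn (insert x ((A ∪ B) \ {ℓ})) x c := fun c hc =>
    (hxA a ha).trans ((ReachIn.of_mem_insert h₂.2 hc).mono hQX)
  refine ⟨lt_umOn_of_reachIn hm hPX hQX hPQ h₁.1 h₂.1 fun p hp q hq =>
    ((ReachIn.of_mem_insert h₁.2 hp).symm.mono hPX).trans (hxQ q hq), ?_⟩
  rintro c ⟨hcA | hcB, hcℓ⟩
  · exact hxA c hcA
  · exact hxQ c (mem_insert_of_mem _ ⟨hcB, hcℓ⟩)

theorem IsUMExchangeable.union_of_mem_left [Finite V] {a b t : V} (hAB : Disjoint A B)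
    (ha : a ∈ A) (hb : b ∈ B) (hab : T.Adj a b) (hA : T.IsUMCriticalOn A m)
    (hB : T.IsUMCriticalOn B m) (hA' : T.IsUMExchangeable A m) (hB' : T.IsUMExchangeable B m)
    (ht : t ∈ A) (hx : x ∉ A ∪ B) (hxt : T.Adj x t) :
    ∃ ℓ ∈ A ∪ B, T.IsUMExchange (A ∪ B) (m + 1) x ℓ := by
  obtain ⟨ℓ₁, hℓ₁, h₁⟩ := hA' t ht x (fun h => hx (.inl h)) hxt
  by_cases haℓ₁ : a = ℓ₁
  · subst haℓ₁
    obtain ⟨ℓ₂, hℓ₂, h₂⟩ := hB' b hb a (Set.disjoint_left.1 hAB ha) hab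
    exact ⟨ℓ₂, .inr hℓ₂, h₁.union_trans h₂ ha hℓ₂ hAB hA ht hxt hx⟩
  · exact ⟨ℓ₁, .inl hℓ₁, h₁.union hℓ₁ ha haℓ₁ hb hab hAB hB fun h => hx (.inr h)⟩

theorem isUMExchangeable_union [Finite V] {a b : V} (hAB : Disjoint A B) (ha : a ∈ A) (hb : b ∈ B)
    (hab : T.Adj a b) (hA : T.IsUMCriticalOn A m) (hB : T.IsUMCriticalOn B m)
    (hA' : T.IsUMExchangeable A m) (hB' : T.IsUMExchangeable B m) :
    T.IsUMExchangeable (A ∪ B) (m + 1) := by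
  rintro t (ht | ht) x hx hxt
  · exact IsUMExchangeable.union_of_mem_left hAB ha hb hab hA hB hA' hB' ht hx hxt
  · rw [union_comm] at hx ⊢
    exact IsUMExchangeable.union_of_mem_left hAB.symm hb ha hab.symm hB hA hB' hA' ht hx hxt

theorem IsUMCriticalOn.isUMExchangeable [Finite V] (hT : T.IsAcyclic) :
    ∀ {j : ℕ} {S : Set V}, T.IsUMCriticalOn S j → T.IsUMExchangeable S j
  | 0, _, h => fun t ht => absurd (h.1 ▸ umOn_pos ⟨t, ht⟩) (lt_irrefl 0)
  | 1, _, h => by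
    obtain ⟨v, rfl⟩ := h.eq_singleton
    rintro t rfl x - -
    exact ⟨t, rfl, by simpa [Nat.one_le_iff_ne_zero] using (umOn_pos (singleton_nonempty x)).ne',
      by simp⟩
  | m + 2, _, h => by
    obtain ⟨A, B, rfl, hAB, hA, hB, a, ha, b, hb, hab⟩ :=
      h.exists_split hT m.succ_pos fun D hD => hD.isUMExchangeable hT
    exact isUMExchangeable_union hAB ha hb hab hA hB (hA.isUMExchangeable hT)
      (hB.isUMExchangeable hT)

theorem IsUMCriticalOn.ncard_eq [Finite V] (hT : T.IsAcyclic) :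
    ∀ {m : ℕ} {S : Set V}, T.IsUMCriticalOn S (m + 1) → S.ncard = 2 ^ m
  | 0, _, h => by
    obtain ⟨v, rfl⟩ := h.eq_singleton
    simp
  | m + 1, _, h => by
    obtain ⟨A, B, rfl, hAB, hA, hB, -⟩ :=
      h.exists_split hT m.succ_pos fun D hD => hD.isUMExchangeable hT
    rw [ncard_union_eq hAB, hA.ncard_eq hT, hB.ncard_eq hT, pow_succ, mul_two]

end

section UM

variable {V : Type} {T : SimpleGraph V} {k : ℕ}

theorem isUMColoring_pathEdges_iff (C : V → Fin k) :
    IsUMColoring (pathEdges T) C ↔ T.IsUMColoringOn univ (fun v => C v) := by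
  have key : ∀ {u w} (p : T.Walk u w), HasUniqueMax (fun v => (C v : ℕ)) p.support ↔
      ∃! v, v ∈ p.support.toFinset ∧ ∀ x ∈ p.support.toFinset, C x ≤ C v := by
    simp only [HasUniqueMax, List.mem_toFinset, Fin.le_iff_val_le_val, implies_true]
  constructor
  · rintro hC u w p hp -
    exact (key p).2 (hC _ ⟨u, w, p, hp, rfl⟩)
  · rintro hC _ ⟨u, w, p, hp, rfl⟩
    exact (key p).1 (hC p hp fun _ _ => trivial)

theorem UM_eq_umOn_univ (T : SimpleGraph V) : UM T = T.umOn univ := by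
  unfold UM umNum umOn
  congr 1
  ext k
  constructor
  · rintro ⟨C, hC⟩
    exact ⟨fun v => C v, fun v _ => (C v).is_lt, (isUMColoring_pathEdges_iff C).1 hC⟩
  · rintro ⟨C, hb, hC⟩
    exact ⟨fun v => ⟨C v, hb v trivial⟩, (isUMColoring_pathEdges_iff _).2 hC⟩

theorem umOn_le_UM_induce [Finite V] (S : Set V) :
    T.umOn S ≤ UM ((⊤ : T.Subgraph).induce S).coe := by
  obtain ⟨C, hb, hC⟩ := umColorableOn_umOn (T := ((⊤ : T.Subgraph).induce S).coe) univ
  rw [UM_eq_umOn_univ]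
  let φ : T.induce S →g ((⊤ : T.Subgraph).induce S).coe := ⟨id, fun {a b} h => ⟨a.2, b.2, h⟩⟩
  refine umOn_le_iff.2 ⟨fun v => if h : v ∈ S then C ⟨v, h⟩ else 0,
    fun v hv => by simpa [hv] using hb _ trivial, fun u w p hp hS => ?_⟩
  have hq : ((p.induce S hS).map φ).IsPath :=
    (Walk.IsPath.of_map (f := (Embedding.induce S).toHom) ((p.map_induce hS).symm ▸ hp)).map
      fun _ _ h => h
  have hsupp : ((p.induce S hS).map φ).support.map Subtype.val = p.support := by
    simp only [Walk.support_map, Walk.support_induce, List.map_map, List.map_attachWith]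
    exact p.support.attach_map_subtype_val
  rw [← hsupp, hasUniqueMax_map Subtype.val_injective]
  exact (hC _ hq fun _ _ => trivial).congr fun x _ => (dif_pos x.2).symm

theorem _root_.UMCriticalK.isUMCriticalOn_univ [Finite V] (h : UMCriticalK k T) :
    T.IsUMCriticalOn univ k := by
  refine ⟨(UM_eq_umOn_univ T).symm.trans h.2, fun S hS => ?_⟩
  refine (umOn_le_UM_induce S).trans_lt (h.2 ▸ h.1 _ fun htop => hS.ne ?_)
  simpa using congrArg Subgraph.verts htop

end UM

end SimpleGraph

theorem stmt9 {V : Type} [Fintype V] (k : ℕ) (hk : 1 ≤ k)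
    (T : SimpleGraph V) (hT : T.IsTree) (hcrit : UMCriticalK k T) :
    Fintype.card V = 2 ^ (k - 1) := by
  obtain ⟨m, rfl⟩ := Nat.exists_eq_add_of_le' hk
  rw [← Nat.card_eq_fintype_card, ← ncard_univ, Nat.add_sub_cancel]
  exact hcrit.isUMCriticalOn_univ.ncard_eq hT.isAcyclic
end
end

section
/- For every l ≥ 0, if an (l+1)-UM-critical tree has no vertex of degree at least 3, then it is isomorphic to the path graph P_{2^l} on 2^l vertices. -/
open scoped Classical

noncomputable section

/-! A tree with no vertex of degree at least 3 is a path: a longest path is hamiltonian (it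
cannot be extended at an end, and an inner vertex already has two neighbours on it), and since
a tree has `|V| - 1` edges the path uses all of them.

On a path with `n` vertices a unique-maximum colouring with `k` colours exists exactly when
`n < 2 ^ k`. The ruler colouring `i ↦ ν₂(i + 1)` achieves this, since between two numbers of
equal `2`-adic valuation lies one of larger valuation. Conversely, removing the unique vertex of
maximum colour splits a path into two subpaths coloured with fewer colours.

So `UM(P_n) = l + 1` forces `n ≥ 2 ^ l`, while criticality forces `n - 1 < 2 ^ l`: deleting an
end vertex leaves a path on `n - 1` vertices inside a proper subgraph, whose UM number is at
most `l`. -/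

section Hypergraph

variable {V W : Type} {E : Set (Finset V)} {k : ℕ}

lemma isUMColoring_of_injective {C : V → Fin k} (hC : Function.Injective C)
    (hE : ∀ e ∈ E, e.Nonempty) : IsUMColoring E C := by
  intro e he
  obtain ⟨v, hv, hmax⟩ := e.exists_max_image C (hE e he)
  exact ⟨v, ⟨hv, hmax⟩, fun w ⟨hw, hwmax⟩ => hC (le_antisymm (hmax w hw) (hwmax v hv))⟩

lemma exists_isUMColoring_umNum [Finite V] (hE : ∀ e ∈ E, e.Nonempty) :
    ∃ C : V → Fin (umNum E), IsUMColoring E C := by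
  obtain ⟨n, ⟨f⟩⟩ := Finite.exists_equiv_fin V
  exact Nat.sInf_mem (s := {k | ∃ C : V → Fin k, IsUMColoring E C})
    ⟨n, f, isUMColoring_of_injective f.injective hE⟩

lemma umNum_le {C : V → Fin k} (hC : IsUMColoring E C) : umNum E ≤ k :=
  Nat.sInf_le ⟨C, hC⟩

lemma IsUMColoring.comp_of_injective {E' : Set (Finset W)} {C : W → Fin k} {f : V → W}
    (hf : Function.Injective f) (hE : ∀ e ∈ E, e.image f ∈ E') (hC : IsUMColoring E' C) :
    IsUMColoring E (C ∘ f) := by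
  intro e he
  obtain ⟨_, ⟨hw, hmax⟩, huniq⟩ := hC _ (hE e he)
  obtain ⟨v, hv, rfl⟩ := Finset.mem_image.mp hw
  refine ⟨v, ⟨hv, fun u hu => hmax _ (Finset.mem_image_of_mem f hu)⟩, fun u ⟨hu, humax⟩ => ?_⟩
  refine hf (huniq (f u) ⟨Finset.mem_image_of_mem f hu, ?_⟩)
  simpa using humax

end Hypergraph

section PadicValNat

lemma exists_padicValNat_two_lt_of_eq {a b : ℕ} (ha : a ≠ 0) (hab : a < b)
    (h : padicValNat 2 a = padicValNat 2 b) :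
    ∃ c, a < c ∧ c < b ∧ padicValNat 2 a < padicValNat 2 c := by
  have hna := pow_succ_padicValNat_not_dvd (p := 2) ha
  have hnb := pow_succ_padicValNat_not_dvd (p := 2) (n := b) (by omega)
  obtain ⟨q, hq⟩ : 2 ^ padicValNat 2 a ∣ a := pow_padicValNat_dvd
  obtain ⟨s, hs⟩ : 2 ^ padicValNat 2 a ∣ b := h.symm ▸ pow_padicValNat_dvd
  rw [← h] at hnb
  generalize padicValNat 2 a = r at hna hnb hq hs ⊢
  subst hq hs
  -- `q` and `s` are odd with `q < s`, so `q + 1` is an even number strictly between them.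
  have hpos : 0 < 2 ^ r := by positivity
  rw [pow_succ, Nat.mul_dvd_mul_iff_left hpos] at hna hnb
  have hqs : q + 2 ≤ s := by
    have := Nat.lt_of_mul_lt_mul_left hab
    omega
  refine ⟨2 ^ r * (q + 1), by nlinarith, by nlinarith, ?_⟩
  have hdvd : 2 ^ (r + 1) ∣ 2 ^ r * (q + 1) := by
    rw [pow_succ]
    exact Nat.mul_dvd_mul_left _ (by omega)
  have := (padicValNat_dvd_iff_le (by positivity)).mp hdvd
  omega

lemma padicValNat_two_lt_of_lt_two_pow {a k : ℕ} (ha : a ≠ 0) (hak : a < 2 ^ k) :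
    padicValNat 2 a < k :=
  (Nat.pow_lt_pow_iff_right (by norm_num)).mp
    ((Nat.le_of_dvd (Nat.pos_of_ne_zero ha) pow_padicValNat_dvd).trans_lt hak)

end PadicValNat

namespace SimpleGraph

section PathHypergraph

variable {V W : Type} {G : SimpleGraph V} {H : SimpleGraph W}

lemma nonempty_of_mem_pathEdges {e : Finset V} (he : e ∈ pathEdges G) : e.Nonempty := by
  obtain ⟨u, v, p, -, rfl⟩ := he
  exact ⟨u, List.mem_toFinset.mpr p.start_mem_support⟩

lemma image_mem_pathEdges (f : Copy G H) {e : Finset V} (he : e ∈ pathEdges G) :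
    e.image f ∈ pathEdges H := by
  obtain ⟨u, v, p, hp, rfl⟩ := he
  refine ⟨_, _, p.map f.toHom, hp.map f.injective, ?_⟩
  ext
  simp [Walk.support_map]

lemma _root_.IsUMColoring.comp_copy {k : ℕ} {C : W → Fin k} (f : Copy G H)
    (hC : IsUMColoring (pathEdges H) C) : IsUMColoring (pathEdges G) (C ∘ f) :=
  hC.comp_of_injective f.injective fun _ => image_mem_pathEdges f

end PathHypergraph

namespace Walk

variable {V : Type} {G : SimpleGraph V} {K : ℕ} {C : V → Fin K}

lemma start_notMem_support_tail {u v : V} {p : G.Walk u v} (hp : p.IsPath) (hnil : ¬p.Nil) :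
    u ∉ p.tail.support := by
  rw [← p.cons_tail_eq hnil, cons_isPath_iff] at hp
  exact hp.2

lemma length_lt_two_pow_of_forall_ne_start {k : ℕ}
    (hpaths : ∀ (a b : V) (q : G.Walk a b), q.IsPath → (∀ x ∈ q.support, (C x : ℕ) < k) →
      q.length + 1 < 2 ^ k)
    {w b : V} {q : G.Walk w b} (hq : q.IsPath) (hC : ∀ x ∈ q.support, x ≠ w → (C x : ℕ) < k) :
    q.length < 2 ^ k := by
  by_cases hnil : q.Nil
  · simp [hnil.length_eq_zero]
  rw [← q.length_tail_add_one hnil]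
  refine hpaths _ _ q.tail hq.tail fun x hx => hC x ?_ ?_
  · rw [← cons_support_tail hnil]
    exact List.mem_cons_of_mem _ hx
  · exact ne_of_mem_of_not_mem hx (start_notMem_support_tail hq hnil)

lemma length_add_one_lt_two_pow_of_isUMColoring (hC : IsUMColoring (pathEdges G) C) :
    ∀ (k : ℕ) (a b : V) (q : G.Walk a b), q.IsPath → (∀ x ∈ q.support, (C x : ℕ) < k) →
      q.length + 1 < 2 ^ k
  | 0, a, _, _, _, hk => absurd (hk a (start_mem_support _)) (Nat.not_lt_zero _)
  | k + 1, a, b, q, hq, hk => by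
    obtain ⟨w, ⟨hw, hmax⟩, huniq⟩ := hC _ ⟨a, b, q, hq, rfl⟩
    simp only [List.mem_toFinset] at hw hmax huniq
    have hlt : ∀ x ∈ q.support, x ≠ w → (C x : ℕ) < k := by
      intro x hx hxw
      have hxw' : C x < C w := (hmax x hx).lt_of_ne fun h =>
        hxw (huniq x ⟨hx, fun y hy => h ▸ hmax y hy⟩)
      have := hk w hw
      rw [Fin.lt_def] at hxw'
      omega
    have ih := length_add_one_lt_two_pow_of_isUMColoring hC k
    have h₁ := length_lt_two_pow_of_forall_ne_start ih (hq.takeUntil hw).reverse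
      fun x hx => hlt x (q.support_takeUntil_subset_support hw (by simpa using hx))
    have h₂ := length_lt_two_pow_of_forall_ne_start ih (hq.dropUntil hw)
      fun x hx => hlt x (q.support_dropUntil_subset_support hw hx)
    have hsplit := congrArg length (q.take_spec hw)
    rw [length_reverse] at h₁
    rw [length_append] at hsplit
    rw [pow_succ]
    omega

lemma IsPath.length_add_one_lt_two_pow_UM [Finite V] {u v : V} {p : G.Walk u v}
    (hp : p.IsPath) : p.length + 1 < 2 ^ UM G := by
  obtain ⟨C, hC⟩ := exists_isUMColoring_umNum fun _ => nonempty_of_mem_pathEdges (G := G)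
  exact length_add_one_lt_two_pow_of_isUMColoring hC _ _ _ p hp fun x _ => (C x).isLt

lemma IsPath.length_lt_two_pow_of_UMCriticalK [Finite V] {l : ℕ} (hG : UMCriticalK (l + 1) G)
    {u v : V} {p : G.Walk u v} (hp : p.IsPath) : p.length < 2 ^ l := by
  by_cases hnil : p.Nil
  · simp [hnil.length_eq_zero]
  have hproper : p.tail.toSubgraph ≠ ⊤ := fun h =>
    start_notMem_support_tail hp hnil (by simp [← mem_verts_toSubgraph, h])
  have hUM := hG.2 ▸ hG.1 _ hproper
  have hmap := p.tail.map_mapToSubgraph_hom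
  have hpath : p.tail.mapToSubgraph.IsPath := IsPath.of_map (hmap ▸ hp.tail)
  have hlen := hpath.length_add_one_lt_two_pow_UM
  rw [← length_map p.tail.toSubgraph.hom, hmap] at hlen
  rw [← length_tail_add_one hnil]
  exact hlen.trans_le (Nat.pow_le_pow_right (by norm_num) (by omega))

end Walk

namespace pathGraph

variable {n : ℕ}

lemma mem_support_of_le_of_le {x y z : Fin n} (q : (pathGraph n).Walk x y) (hxz : x ≤ z)
    (hzy : z ≤ y) : z ∈ q.support := by
  rcases hxz.eq_or_lt with rfl | hxz
  · exact q.start_mem_support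
  obtain ⟨d, hd, hfst, hsnd⟩ := q.exists_boundary_dart {w | w < z} hxz (not_lt.mpr hzy)
  have hdz : d.snd = z := by
    have := pathGraph_adj.mp d.adj
    simp only [Set.mem_ofPred_eq, not_lt, Fin.lt_def] at hfst hsnd
    ext
    omega
  exact hdz ▸ q.dart_snd_mem_support_of_mem_darts hd

lemma mem_support_of_mem_of_mem {a b x y z : Fin n} {p : (pathGraph n).Walk a b}
    (hx : x ∈ p.support) (hy : y ∈ p.support) (hxz : x ≤ z) (hzy : z ≤ y) : z ∈ p.support := by
  have hz := mem_support_of_le_of_le ((p.takeUntil x hx).reverse.append (p.takeUntil y hy)) hxz hzy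
  rw [Walk.mem_support_append_iff, Walk.support_reverse, List.mem_reverse] at hz
  exact hz.elim (p.support_takeUntil_subset_support hx ·) (p.support_takeUntil_subset_support hy ·)

lemma exists_isUMColoring {k : ℕ} (hn : n < 2 ^ k) :
    ∃ C : Fin n → Fin k, IsUMColoring (pathEdges (pathGraph n)) C := by
  let C : Fin n → Fin k := fun i =>
    ⟨padicValNat 2 (i + 1), padicValNat_two_lt_of_lt_two_pow (by omega) (by omega)⟩
  refine ⟨C, ?_⟩
  rintro e ⟨a, b, p, -, rfl⟩
  simp only [List.mem_toFinset]
  obtain ⟨m, hm, hmax⟩ := p.support.toFinset.exists_max_image C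
    ⟨a, List.mem_toFinset.mpr p.start_mem_support⟩
  simp only [List.mem_toFinset] at hm hmax
  have hno_tie : ∀ x ∈ p.support, ∀ y ∈ p.support, x < y → C x = C y → C m ≤ C x → False := by
    intro x hx y hy hxy hCxy hmx
    obtain ⟨c, hxc, hcy, hlt⟩ := exists_padicValNat_two_lt_of_eq (a := x + 1) (b := y + 1)
      (by omega) (by omega) (congrArg Fin.val hCxy)
    have hc := hmax ⟨c - 1, by omega⟩ (mem_support_of_mem_of_mem hx hy
      (by simp only [Fin.le_def]; omega) (by simp only [Fin.le_def]; omega))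
    rw [Fin.le_def] at hc hmx
    dsimp only [C] at hc hmx
    rw [show c - 1 + 1 = c by omega] at hc
    omega
  refine ⟨m, ⟨hm, hmax⟩, fun w ⟨hw, hwmax⟩ => ?_⟩
  have hCwm : C w = C m := le_antisymm (hmax w hw) (hwmax m hm)
  rcases lt_trichotomy w m with h | h | h
  · exact (hno_tie w hw m hm h hCwm hCwm.ge).elim
  · exact h
  · exact (hno_tie m hm w hw h hCwm.symm le_rfl).elim

end pathGraph

section Trees

variable {V : Type} [Fintype V] {G : SimpleGraph V} {u v : V}

lemma degree_eq_ncard_neighborSet (v : V) : G.degree v = (G.neighborSet v).ncard := by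
  rw [← card_neighborFinset_eq_degree, ← Set.ncard_coe_finset, coe_neighborFinset]

lemma Connected.isHamiltonian_of_degree_lt_three (hconn : G.Connected)
    (hdeg : ∀ v, G.degree v < 3) {p : G.Walk u v} (hp : p.IsPath)
    (hmax : ∀ (u' v' : V) (q : G.Walk u' v'), q.IsPath → q.length ≤ p.length) :
    p.IsHamiltonian := by
  refine hp.isHamiltonian_of_mem fun z => by_contra fun hz => ?_
  obtain ⟨⟨⟨w, y⟩, hwy⟩, -, hw, hy⟩ :=
    (hconn.preconnected u z).some.exists_boundary_dart {x | x ∈ p.support} p.start_mem_support hz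
  simp only [Set.mem_ofPred_eq] at hw hy
  by_cases hwu : w = u
  · subst hwu
    have := hmax _ _ _ (hp.cons hy (h := hwy.symm))
    simp at this
  by_cases hwv : w = v
  · subst hwv
    have := hmax _ _ _ (hp.concat hy hwy)
    simp at this
  obtain ⟨i, rfl, hi⟩ := Walk.mem_support_iff_exists_getVert.mp hw
  have hi₀ : i ≠ 0 := by
    rintro rfl
    simp at hwu
  have hi' : i < p.length := hi.lt_of_ne (by rintro rfl; simp at hwv)
  have hN := hp.ncard_neighborSet_toSubgraph_internal_eq_two hi₀ hi'
  have hyN : y ∉ p.toSubgraph.neighborSet (p.getVert i) := fun h =>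
    hy (Walk.mem_support_of_adj_toSubgraph (p.toSubgraph.adj_symm h))
  have hsub : insert y (p.toSubgraph.neighborSet (p.getVert i)) ⊆ G.neighborSet (p.getVert i) :=
    Set.insert_subset hwy fun x hx => p.toSubgraph.adj_sub hx
  have := Set.ncard_le_ncard hsub (Set.toFinite _)
  rw [Set.ncard_insert_of_notMem hyN (p.finite_neighborSet_toSubgraph), hN,
    ← degree_eq_ncard_neighborSet] at this
  have := hdeg (p.getVert i)
  omega

lemma IsTree.toSubgraph_eq_top_of_isHamiltonian (hT : G.IsTree) {p : G.Walk u v}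
    (hp : p.IsHamiltonian) : p.toSubgraph = ⊤ := by
  have hsub : p.edges.toFinset ⊆ G.edgeFinset := fun e he =>
    mem_edgeFinset.mpr (p.edges_subset_edgeSet (List.mem_toFinset.mp he))
  have hcard : G.edgeFinset.card ≤ p.edges.toFinset.card := by
    rw [List.toFinset_card_of_nodup hp.isPath.isTrail.edges_nodup, Walk.length_edges,
      hp.length_eq]
    have := hT.card_edgeFinset
    omega
  have hedges := Finset.eq_of_subset_of_card_le hsub hcard
  ext a b
  · simp [hp.mem_support]
  · refine ⟨fun h => p.toSubgraph.adj_sub h, fun h => ?_⟩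
    rw [Walk.adj_toSubgraph_iff_mem_edges, ← List.mem_toFinset, hedges]
    exact mem_edgeFinset.mpr h

lemma IsTree.nonempty_iso_pathGraph_of_isHamiltonian (hT : G.IsTree) {p : G.Walk u v}
    (hp : p.IsHamiltonian) : Nonempty (pathGraph (p.length + 1) ≃g G) := by
  have e := hp.isPath.pathGraphIsoToSubgraph
  rw [hT.toSubgraph_eq_top_of_isHamiltonian hp] at e
  exact ⟨e.trans Subgraph.topIso⟩

end Trees

end SimpleGraph

open SimpleGraph

theorem stmt10 {V : Type} [Fintype V] (l : ℕ) (T : SimpleGraph V) (hT : T.IsTree)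
    (hcrit : UMCriticalK (l + 1) T) (hdeg : ∀ v : V, T.degree v < 3) :
    Nonempty (T ≃g SimpleGraph.pathGraph (2 ^ l)) := by
  have : Nonempty V := hT.connected.nonempty
  obtain ⟨u, v, p, hp, hmax⟩ := Walk.exists_isPath_forall_isPath_length_le_length T
  obtain ⟨φ⟩ := hT.nonempty_iso_pathGraph_of_isHamiltonian
    (hT.connected.isHamiltonian_of_degree_lt_three hdeg hp hmax)
  have hlower : 2 ^ l ≤ p.length + 1 := by
    by_contra! h
    obtain ⟨C, hC⟩ := pathGraph.exists_isUMColoring h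
    have : UM T ≤ l := umNum_le (hC.comp_copy φ.symm.toCopy)
    have := hcrit.2
    omega
  have hupper := hp.length_lt_two_pow_of_UMCriticalK hcrit
  rw [← show p.length + 1 = 2 ^ l by omega]
  exact ⟨φ.symm⟩
end
end
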